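/- arXiv:1303.7247 — 14 statements merged into one kernel-verified Lean document; each statement's English description precedes it below -/
import Mathlib

section
/- For every x ∈ ℝⁿ and all real numbers p₁, p₂ with 0 < p₁ < p₂, one has D(x, p₁) < D(x, p₂). -/
/-- The log-exponential smoothing function
`D(x, p) = p ln Σᵢ exp(√(d(x; Ωᵢ)² + p²) / p)`. -/
noncomputable def Dsmooth {n m : ℕ} (Ω : Fin m → Set (EuclideanSpace ℝ (Fin n)))
    (x : EuclideanSpace ℝ (Fin n)) (p : ℝ) : ℝ :=
  p * Real.log (∑ i, Real.exp (Real.sqrt (Metric.infDist x (Ω i) ^ 2 + p ^ 2) / p))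

/-- For every `x ∈ ℝⁿ` and all reals `0 < p₁ < p₂`,
one has `D(x, p₁) < D(x, p₂)`. -/
theorem stmt_2 {n m : ℕ} (hm : 1 < m) (Ω : Fin m → Set (EuclideanSpace ℝ (Fin n)))
    (hne : ∀ i, (Ω i).Nonempty) (hcl : ∀ i, IsClosed (Ω i)) (hconv : ∀ i, Convex ℝ (Ω i))
    (x : EuclideanSpace ℝ (Fin n)) (p₁ p₂ : ℝ) (hp₁ : 0 < p₁) (hp : p₁ < p₂) :
    Dsmooth Ω x p₁ < Dsmooth Ω x p₂ := by
  have hp₂ : 0 < p₂ := hp₁.trans hp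
  have : Nonempty (Fin m) := ⟨⟨0, by omega⟩⟩
  set d : Fin m → ℝ := fun i => Metric.infDist x (Ω i) with hd
  set b₁ : Fin m → ℝ := fun i => Real.sqrt (d i ^ 2 + p₁ ^ 2) / p₁ with hb₁
  set b₂ : Fin m → ℝ := fun i => Real.sqrt (d i ^ 2 + p₂ ^ 2) / p₂ with hb₂
  set S₁ : ℝ := ∑ i, Real.exp (b₁ i) with hS₁def
  set S₂ : ℝ := ∑ i, Real.exp (b₂ i) with hS₂def
  have hS₁ : 0 < S₁ := Finset.sum_pos (fun i _ => Real.exp_pos _) Finset.univ_nonempty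
  have hS₂ : 0 < S₂ := Finset.sum_pos (fun i _ => Real.exp_pos _) Finset.univ_nonempty
  set q : Fin m → ℝ := fun i => Real.exp (b₁ i) / S₁ with hq
  have hq0 : ∀ i, 0 < q i := fun i => div_pos (Real.exp_pos _) hS₁
  have hq1 : ∑ i, q i = 1 := by
    rw [hq]
    rw [← Finset.sum_div]
    field_simp
    exact hS₁def.symm
  have hqle : ∀ i, q i ≤ 1 := by
    intro i
    rw [hq, div_le_one hS₁]
    exact Finset.single_le_sum (f := fun i => Real.exp (b₁ i))
      (fun j _ => (Real.exp_pos _).le) (Finset.mem_univ i)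
  have hlogq : ∀ i, Real.log (q i) = b₁ i - Real.log S₁ := fun i => by
    rw [hq, Real.log_div (Real.exp_ne_zero _) hS₁.ne', Real.log_exp]
  have hlogq_le : ∀ i, Real.log (q i) ≤ 0 := fun i =>
    Real.log_nonpos (hq0 i).le (hqle i)
  -- equality: log S₁ = ∑ q i * (b₁ i - log q i)
  have hEq : Real.log S₁ = ∑ i, q i * (b₁ i - Real.log (q i)) := by
    have : ∀ i, q i * (b₁ i - Real.log (q i)) = q i * Real.log S₁ := by
      intro i; rw [hlogq]; ring
    rw [Finset.sum_congr rfl fun i _ => this i, ← Finset.sum_mul, hq1, one_mul]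
  -- Jensen: ∑ q i * (b₂ i - log q i) ≤ log S₂
  have hJensen : ∑ i, q i * (b₂ i - Real.log (q i)) ≤ Real.log S₂ := by
    have hconc : ConcaveOn ℝ (Set.Ioi (0:ℝ)) Real.log :=
      strictConcaveOn_log_Ioi.concaveOn
    have h := hconc.le_map_sum (t := Finset.univ) (w := q)
      (p := fun i => Real.exp (b₂ i) / q i)
      (fun i _ => (hq0 i).le) hq1
      (fun i _ => Set.mem_Ioi.2 (div_pos (Real.exp_pos _) (hq0 i)))
    have hsum : ∑ i, q i • (Real.exp (b₂ i) / q i) = S₂ := by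
      rw [hS₂def]
      refine Finset.sum_congr rfl fun i _ => ?_
      rw [smul_eq_mul, mul_div_cancel₀ _ (hq0 i).ne']
    rw [hsum] at h
    refine le_trans (le_of_eq ?_) h
    refine Finset.sum_congr rfl fun i _ => ?_
    rw [smul_eq_mul, Real.log_div (Real.exp_ne_zero _) (hq0 i).ne', Real.log_exp]
  -- rewrite Dsmooth
  have hD₁ : Dsmooth Ω x p₁ = p₁ * Real.log S₁ := rfl
  have hD₂ : Dsmooth Ω x p₂ = p₂ * Real.log S₂ := rfl
  rw [hD₁, hD₂]
  calc p₁ * Real.log S₁ = ∑ i, q i * (p₁ * b₁ i - p₁ * Real.log (q i)) := by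
        rw [hEq, Finset.mul_sum]
        exact Finset.sum_congr rfl fun i _ => by ring
    _ < ∑ i, q i * (p₂ * b₂ i - p₂ * Real.log (q i)) := by
        refine Finset.sum_lt_sum_of_nonempty Finset.univ_nonempty fun i _ => ?_
        refine mul_lt_mul_of_pos_left ?_ (hq0 i)
        have h1 : p₁ * b₁ i < p₂ * b₂ i := by
          rw [hb₁, hb₂]
          simp only
          rw [mul_div_cancel₀ _ hp₁.ne', mul_div_cancel₀ _ hp₂.ne']
          apply Real.sqrt_lt_sqrt (by positivity)
          have := sq_nonneg (d i)
          nlinarith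
        have h2 : p₂ * Real.log (q i) ≤ p₁ * Real.log (q i) :=
          mul_le_mul_of_nonpos_right hp.le (hlogq_le i)
        linarith
    _ = p₂ * ∑ i, q i * (b₂ i - Real.log (q i)) := by
        rw [Finset.mul_sum]
        exact Finset.sum_congr rfl fun i _ => by ring
    _ ≤ p₂ * Real.log S₂ := by
        exact mul_le_mul_of_nonneg_left hJensen hp₂.le
end

section
/- For every x ∈ ℝⁿ and every p > 0, one has 0 ≤ D(x, p) − D(x) ≤ p(1 + ln m). -/
/-- `D(x) = max{d(x; Ωᵢ) : i = 1, …, m}`. -/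
noncomputable def Dmax {n m : ℕ} (Ω : Fin m → Set (EuclideanSpace ℝ (Fin n)))
    (x : EuclideanSpace ℝ (Fin n)) : ℝ :=
  ⨆ i, Metric.infDist x (Ω i)

set_option maxHeartbeats 1000000 in
/-- For every `x ∈ ℝⁿ` and every `p > 0`,
`0 ≤ D(x, p) − D(x) ≤ p(1 + ln m)`. -/
theorem stmt_3 {n m : ℕ} (hm : 1 < m) (Ω : Fin m → Set (EuclideanSpace ℝ (Fin n)))
    (hne : ∀ i, (Ω i).Nonempty) (hcl : ∀ i, IsClosed (Ω i)) (hconv : ∀ i, Convex ℝ (Ω i))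
    (x : EuclideanSpace ℝ (Fin n)) (p : ℝ) (hp : 0 < p) :
    0 ≤ Dsmooth Ω x p - Dmax Ω x ∧ Dsmooth Ω x p - Dmax Ω x ≤ p * (1 + Real.log m) := by
  have hm0 : 0 < m := by omega
  haveI : Nonempty (Fin m) := ⟨⟨0, hm0⟩⟩
  set d : Fin m → ℝ := fun i => Metric.infDist x (Ω i) with hdd
  have hd0 : ∀ i, 0 ≤ d i := fun i => Metric.infDist_nonneg
  set G : Fin m → ℝ := fun i => Real.sqrt (d i ^ 2 + p ^ 2) with hGG
  have hGle : ∀ i, G i ≤ d i + p := by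
    intro i
    rw [show d i + p = Real.sqrt ((d i + p) ^ 2) from (Real.sqrt_sq (add_nonneg (hd0 i) hp.le)).symm]
    apply Real.sqrt_le_sqrt
    nlinarith [hd0 i, hp]
  have hGge : ∀ i, d i ≤ G i := by
    intro i
    rw [show d i = Real.sqrt (d i ^ 2) from (Real.sqrt_sq (hd0 i)).symm]
    apply Real.sqrt_le_sqrt
    nlinarith
  have hbdd : BddAbove (Set.range d) := Set.Finite.bddAbove (Set.finite_range d)
  have hDs : Dsmooth Ω x p = p * Real.log (∑ i, Real.exp (G i / p)) := rfl
  have hD : Dmax Ω x = ⨆ i, d i := rfl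
  have hsum_ge : ∀ j, Real.exp (G j / p) ≤ ∑ i, Real.exp (G i / p) :=
    fun j => Finset.single_le_sum (f := fun i => Real.exp (G i / p)) (fun i _ => (Real.exp_pos _).le) (Finset.mem_univ j)
  constructor
  · rw [sub_nonneg, hD, hDs]
    apply ciSup_le
    intro j
    refine le_trans (hGge j) ?_
    calc G j = p * (G j / p) := by field_simp
      _ ≤ p * Real.log (∑ i, Real.exp (G i / p)) := by
          apply mul_le_mul_of_nonneg_left _ hp.le
          rw [← Real.log_exp (G j / p)]
          exact Real.log_le_log (Real.exp_pos _) (hsum_ge j)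
  · have hDi : ∀ i, d i ≤ Dmax Ω x := fun i => le_ciSup hbdd i
    have hsum_le : ∑ i, Real.exp (G i / p) ≤ m * Real.exp ((Dmax Ω x + p) / p) := by
      calc ∑ i, Real.exp (G i / p) ≤ ∑ _i : Fin m, Real.exp ((Dmax Ω x + p) / p) := by
            apply Finset.sum_le_sum
            intro i _
            apply Real.exp_le_exp.2
            have : G i ≤ Dmax Ω x + p := le_trans (hGle i) (by linarith [hDi i])
            gcongr
        _ = m * Real.exp ((Dmax Ω x + p) / p) := by
            simp [Finset.sum_const, Finset.card_univ, nsmul_eq_mul]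
    have hlog : Real.log (∑ i, Real.exp (G i / p)) ≤ Real.log m + (Dmax Ω x + p) / p := by
      calc Real.log (∑ i, Real.exp (G i / p))
          ≤ Real.log (m * Real.exp ((Dmax Ω x + p) / p)) :=
            Real.log_le_log (Finset.sum_pos (fun i _ => Real.exp_pos _) Finset.univ_nonempty)
              hsum_le
        _ = Real.log m + (Dmax Ω x + p) / p := by
            rw [Real.log_mul (by positivity) (Real.exp_ne_zero _), Real.log_exp]
    rw [hDs]
    have : p * Real.log (∑ i, Real.exp (G i / p)) ≤ p * (Real.log m + (Dmax Ω x + p) / p) :=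
      mul_le_mul_of_nonneg_left hlog hp.le
    have hexp : p * (Real.log m + (Dmax Ω x + p) / p) = p * Real.log m + Dmax Ω x + p := by
      field_simp; ring
    linarith
end

section
/- For every p > 0, the function x ↦ D(x, p) is convex on ℝⁿ; that is, for all x, y ∈ ℝⁿ and λ ∈ (0, 1), D(λx + (1−λ)y, p) ≤ λ D(x, p) + (1−λ) D(y, p). -/
/-- Scalar convexity lemma: `t ↦ √(t² + p²)` is convex on `[0, ∞)`. -/
lemma aux_sqrt_convex {p l a b : ℝ} (hp : 0 < p) (hl0 : 0 ≤ l) (hl1 : l ≤ 1)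
    (ha : 0 ≤ a) (hb : 0 ≤ b) :
    Real.sqrt ((l * a + (1 - l) * b) ^ 2 + p ^ 2) ≤
      l * Real.sqrt (a ^ 2 + p ^ 2) + (1 - l) * Real.sqrt (b ^ 2 + p ^ 2) := by
  set s := Real.sqrt (a ^ 2 + p ^ 2) with hs_def
  set t := Real.sqrt (b ^ 2 + p ^ 2) with ht_def
  have hs : 0 ≤ s := Real.sqrt_nonneg _
  have ht : 0 ≤ t := Real.sqrt_nonneg _
  have hs2 : s ^ 2 = a ^ 2 + p ^ 2 := Real.sq_sqrt (by positivity)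
  have ht2 : t ^ 2 = b ^ 2 + p ^ 2 := Real.sq_sqrt (by positivity)
  have hst : a * b + p ^ 2 ≤ s * t := by
    have hmul : s * t = Real.sqrt ((a ^ 2 + p ^ 2) * (b ^ 2 + p ^ 2)) :=
      (Real.sqrt_mul (by positivity) _).symm
    rw [hmul]
    rw [Real.le_sqrt (by positivity) (by positivity)]
    nlinarith [sq_nonneg (a * p - b * p)]
  have hR : 0 ≤ l * s + (1 - l) * t := by
    have : 0 ≤ 1 - l := by linarith
    positivity
  have hsq : (l * a + (1 - l) * b) ^ 2 + p ^ 2 ≤ (l * s + (1 - l) * t) ^ 2 := by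
    have hll : 0 ≤ 2 * l * (1 - l) := by nlinarith
    nlinarith [mul_le_mul_of_nonneg_left hst hll]
  calc Real.sqrt ((l * a + (1 - l) * b) ^ 2 + p ^ 2)
      ≤ Real.sqrt ((l * s + (1 - l) * t) ^ 2) := Real.sqrt_le_sqrt hsq
    _ = l * s + (1 - l) * t := Real.sqrt_sq hR

/-- Hölder step: log-sum-exp inequality. -/
lemma aux_holder {m : ℕ} (hm : 0 < m) {l : ℝ} (hl0 : 0 < l) (hl1 : l < 1)
    (u v : Fin m → ℝ) :
    (∑ i, Real.exp (l * u i + (1 - l) * v i)) ≤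
      (∑ i, Real.exp (u i)) ^ l * (∑ i, Real.exp (v i)) ^ (1 - l) := by
  have hl1' : 0 < 1 - l := by linarith
  have hconj : Real.HolderConjugate (1 / l) (1 / (1 - l)) := by
    simpa only [one_div] using Real.HolderConjugate.inv_one_sub_inv hl0 hl1
  calc (∑ i, Real.exp (l * u i + (1 - l) * v i))
      = ∑ i, Real.exp (u i) ^ l * Real.exp (v i) ^ (1 - l) := by
        refine Finset.sum_congr rfl fun i _ => ?_
        rw [Real.exp_add, mul_comm l (u i), mul_comm (1 - l) (v i),
          Real.exp_mul, Real.exp_mul]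
    _ ≤ (∑ i, |Real.exp (u i) ^ l| ^ (1 / l)) ^ (1 / (1 / l)) *
          (∑ i, |Real.exp (v i) ^ (1 - l)| ^ (1 / (1 - l))) ^ (1 / (1 / (1 - l))) :=
        Real.inner_le_Lp_mul_Lq Finset.univ _ _ hconj
    _ = (∑ i, Real.exp (u i)) ^ l * (∑ i, Real.exp (v i)) ^ (1 - l) := by
        rw [one_div_one_div, one_div_one_div]
        congr 2
        · refine Finset.sum_congr rfl fun i _ => ?_
          rw [abs_of_nonneg (Real.rpow_nonneg (Real.exp_pos _).le _),
            ← Real.rpow_mul (Real.exp_pos _).le,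
            mul_one_div_cancel hl0.ne', Real.rpow_one]
        · refine Finset.sum_congr rfl fun i _ => ?_
          rw [abs_of_nonneg (Real.rpow_nonneg (Real.exp_pos _).le _),
            ← Real.rpow_mul (Real.exp_pos _).le]
          rw [mul_one_div_cancel hl1'.ne', Real.rpow_one]

/-- For every `p > 0`, the function `x ↦ D(x, p)` is convex on `ℝⁿ`:
for all `x, y` and `λ ∈ (0, 1)`,
`D(λx + (1−λ)y, p) ≤ λ D(x, p) + (1−λ) D(y, p)`. -/
theorem stmt_4 {n m : ℕ} (hm : 1 < m) (Ω : Fin m → Set (EuclideanSpace ℝ (Fin n)))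
    (hne : ∀ i, (Ω i).Nonempty) (hcl : ∀ i, IsClosed (Ω i)) (hconv : ∀ i, Convex ℝ (Ω i))
    (p : ℝ) (hp : 0 < p) :
    ∀ x y : EuclideanSpace ℝ (Fin n), ∀ l ∈ Set.Ioo (0 : ℝ) 1,
      Dsmooth Ω (l • x + (1 - l) • y) p ≤ l * Dsmooth Ω x p + (1 - l) * Dsmooth Ω y p := by
  intro x y l hl
  obtain ⟨hl0, hl1⟩ := hl
  have hl1' : 0 < 1 - l := by linarith
  set z := l • x + (1 - l) • y with hz
  -- convexity of g_i
  have key : ∀ i, Real.sqrt (Metric.infDist z (Ω i) ^ 2 + p ^ 2) ≤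
      l * Real.sqrt (Metric.infDist x (Ω i) ^ 2 + p ^ 2) +
      (1 - l) * Real.sqrt (Metric.infDist y (Ω i) ^ 2 + p ^ 2) := by
    intro i
    obtain ⟨a, ha, hax⟩ := (hcl i).exists_infDist_eq_dist (hne i) x
    obtain ⟨b, hb, hby⟩ := (hcl i).exists_infDist_eq_dist (hne i) y
    have hmem : l • a + (1 - l) • b ∈ Ω i :=
      (hconv i) ha hb hl0.le hl1'.le (by ring)
    have hdz : Metric.infDist z (Ω i) ≤ l * dist x a + (1 - l) * dist y b := by
      calc Metric.infDist z (Ω i) ≤ dist z (l • a + (1 - l) • b) :=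
            Metric.infDist_le_dist_of_mem hmem
        _ ≤ l * dist x a + (1 - l) * dist y b := by
            rw [dist_eq_norm, dist_eq_norm, dist_eq_norm]
            calc ‖z - (l • a + (1 - l) • b)‖
                = ‖l • (x - a) + (1 - l) • (y - b)‖ := by
                  rw [hz]; congr 1; module
              _ ≤ ‖l • (x - a)‖ + ‖(1 - l) • (y - b)‖ := norm_add_le _ _
              _ = l * ‖x - a‖ + (1 - l) * ‖y - b‖ := by
                  rw [norm_smul, norm_smul, Real.norm_of_nonneg hl0.le,
                    Real.norm_of_nonneg hl1'.le]
    have hdz' : Metric.infDist z (Ω i) ≤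
        l * Metric.infDist x (Ω i) + (1 - l) * Metric.infDist y (Ω i) := by
      rw [hax, hby]; exact hdz
    have hnn : 0 ≤ Metric.infDist z (Ω i) := Metric.infDist_nonneg
    calc Real.sqrt (Metric.infDist z (Ω i) ^ 2 + p ^ 2)
        ≤ Real.sqrt ((l * Metric.infDist x (Ω i) + (1 - l) * Metric.infDist y (Ω i)) ^ 2
            + p ^ 2) := by
          apply Real.sqrt_le_sqrt
          have : Metric.infDist z (Ω i) ^ 2 ≤
              (l * Metric.infDist x (Ω i) + (1 - l) * Metric.infDist y (Ω i)) ^ 2 :=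
            pow_le_pow_left₀ hnn hdz' 2
          linarith
      _ ≤ l * Real.sqrt (Metric.infDist x (Ω i) ^ 2 + p ^ 2) +
            (1 - l) * Real.sqrt (Metric.infDist y (Ω i) ^ 2 + p ^ 2) :=
          aux_sqrt_convex hp hl0.le hl1.le Metric.infDist_nonneg Metric.infDist_nonneg
  -- notation for the sums
  set ux : Fin m → ℝ := fun i => Real.sqrt (Metric.infDist x (Ω i) ^ 2 + p ^ 2) / p with hux
  set uy : Fin m → ℝ := fun i => Real.sqrt (Metric.infDist y (Ω i) ^ 2 + p ^ 2) / p with huy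
  have hmpos : 0 < m := lt_trans Nat.zero_lt_one hm
  have hne' : (Finset.univ : Finset (Fin m)).Nonempty :=
    ⟨⟨0, hmpos⟩, Finset.mem_univ _⟩
  have hSz : (0:ℝ) < ∑ i, Real.exp (Real.sqrt (Metric.infDist z (Ω i) ^ 2 + p ^ 2) / p) :=
    Finset.sum_pos (fun i _ => Real.exp_pos _) hne'
  have hSx : (0:ℝ) < ∑ i, Real.exp (ux i) := Finset.sum_pos (fun i _ => Real.exp_pos _) hne'
  have hSy : (0:ℝ) < ∑ i, Real.exp (uy i) := Finset.sum_pos (fun i _ => Real.exp_pos _) hne'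
  have step1 : (∑ i, Real.exp (Real.sqrt (Metric.infDist z (Ω i) ^ 2 + p ^ 2) / p)) ≤
      ∑ i, Real.exp (l * ux i + (1 - l) * uy i) := by
    refine Finset.sum_le_sum fun i _ => ?_
    apply Real.exp_le_exp.mpr
    have h := key i
    have heq : l * ux i + (1 - l) * uy i =
        (l * Real.sqrt (Metric.infDist x (Ω i) ^ 2 + p ^ 2) +
          (1 - l) * Real.sqrt (Metric.infDist y (Ω i) ^ 2 + p ^ 2)) / p := by
      simp only [hux, huy]; ring
    rw [heq]
    exact (div_le_div_iff_of_pos_right hp).mpr h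
  have step2 := aux_holder hmpos hl0 hl1 ux uy
  have hfinal : (∑ i, Real.exp (Real.sqrt (Metric.infDist z (Ω i) ^ 2 + p ^ 2) / p)) ≤
      (∑ i, Real.exp (ux i)) ^ l * (∑ i, Real.exp (uy i)) ^ (1 - l) :=
    le_trans step1 step2
  have hlog : Real.log (∑ i, Real.exp (Real.sqrt (Metric.infDist z (Ω i) ^ 2 + p ^ 2) / p)) ≤
      l * Real.log (∑ i, Real.exp (ux i)) + (1 - l) * Real.log (∑ i, Real.exp (uy i)) := by
    calc Real.log (∑ i, Real.exp (Real.sqrt (Metric.infDist z (Ω i) ^ 2 + p ^ 2) / p))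
        ≤ Real.log ((∑ i, Real.exp (ux i)) ^ l * (∑ i, Real.exp (uy i)) ^ (1 - l)) :=
          Real.log_le_log hSz hfinal
      _ = l * Real.log (∑ i, Real.exp (ux i)) + (1 - l) * Real.log (∑ i, Real.exp (uy i)) := by
          rw [Real.log_mul (Real.rpow_pos_of_pos hSx _).ne' (Real.rpow_pos_of_pos hSy _).ne',
            Real.log_rpow hSx, Real.log_rpow hSy]
  unfold Dsmooth
  have := mul_le_mul_of_nonneg_left hlog hp.le
  calc p * Real.log (∑ i, Real.exp (Real.sqrt (Metric.infDist z (Ω i) ^ 2 + p ^ 2) / p))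
      ≤ p * (l * Real.log (∑ i, Real.exp (ux i)) +
          (1 - l) * Real.log (∑ i, Real.exp (uy i))) := this
    _ = l * (p * Real.log (∑ i, Real.exp (ux i))) +
          (1 - l) * (p * Real.log (∑ i, Real.exp (uy i))) := by ring
end

section
/- Suppose that at least one of the target sets Ω₁, …, Ω_m is bounded. Then for every p > 0 the function x ↦ D(x, p) is coercive: D(x, p) → ∞ as ‖x‖ → ∞. -/
set_option maxHeartbeats 1000000


/-- If at least one of the target sets `Ω₁, …, Ω_m` is bounded, then for
every `p > 0` the function `x ↦ D(x, p)` is coercive: `D(x, p) → ∞` as `‖x‖ → ∞`. -/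
theorem stmt_5 {n m : ℕ} (hm : 1 < m) (Ω : Fin m → Set (EuclideanSpace ℝ (Fin n)))
    (hne : ∀ i, (Ω i).Nonempty) (hcl : ∀ i, IsClosed (Ω i)) (hconv : ∀ i, Convex ℝ (Ω i))
    (hbdd : ∃ i, Bornology.IsBounded (Ω i)) (p : ℝ) (hp : 0 < p) :
    Filter.Tendsto (fun x : EuclideanSpace ℝ (Fin n) => Dsmooth Ω x p)
      (Filter.comap (fun x : EuclideanSpace ℝ (Fin n) => ‖x‖) Filter.atTop)
      Filter.atTop := by
  obtain ⟨j, hj⟩ := hbdd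
  obtain ⟨C, hC⟩ := hj.exists_norm_le
  -- lower bound: Dsmooth Ω x p ≥ ‖x‖ - C
  have key : ∀ x : EuclideanSpace ℝ (Fin n), ‖x‖ - C ≤ Dsmooth Ω x p := by
    intro x
    have hd : ‖x‖ - C ≤ Metric.infDist x (Ω j) := by
      rw [Metric.infDist_eq_iInf]
      have := (hne j).to_subtype
      apply le_ciInf
      rintro ⟨y, hy⟩
      have : ‖x‖ - ‖y‖ ≤ dist x y := by
        simpa [dist_eq_norm] using norm_sub_norm_le x y
      linarith [hC y hy]
    have hd0 : 0 ≤ Metric.infDist x (Ω j) := Metric.infDist_nonneg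
    have hG : Metric.infDist x (Ω j) ≤
        Real.sqrt (Metric.infDist x (Ω j) ^ 2 + p ^ 2) := by
      rw [Real.le_sqrt hd0 (by positivity)]
      nlinarith [sq_nonneg p]
    have hsum : Real.exp (Real.sqrt (Metric.infDist x (Ω j) ^ 2 + p ^ 2) / p) ≤
        ∑ i, Real.exp (Real.sqrt (Metric.infDist x (Ω i) ^ 2 + p ^ 2) / p) :=
      Finset.single_le_sum
        (f := fun i : Fin m => Real.exp (Real.sqrt (Metric.infDist x (Ω i) ^ 2 + p ^ 2) / p))
        (fun i _ => (Real.exp_pos _).le) (Finset.mem_univ j)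
    have hlog : Real.sqrt (Metric.infDist x (Ω j) ^ 2 + p ^ 2) / p ≤
        Real.log (∑ i, Real.exp (Real.sqrt (Metric.infDist x (Ω i) ^ 2 + p ^ 2) / p)) := by
      rw [show Real.sqrt (Metric.infDist x (Ω j) ^ 2 + p ^ 2) / p =
        Real.log (Real.exp (Real.sqrt (Metric.infDist x (Ω j) ^ 2 + p ^ 2) / p)) by
        rw [Real.log_exp]]
      exact Real.log_le_log (Real.exp_pos _) hsum
    have : Real.sqrt (Metric.infDist x (Ω j) ^ 2 + p ^ 2) ≤ Dsmooth Ω x p := by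
      unfold Dsmooth
      calc Real.sqrt (Metric.infDist x (Ω j) ^ 2 + p ^ 2)
          = p * (Real.sqrt (Metric.infDist x (Ω j) ^ 2 + p ^ 2) / p) := by
            field_simp
        _ ≤ _ := by
            exact mul_le_mul_of_nonneg_left hlog hp.le
    linarith
  apply Filter.tendsto_atTop_mono key
  have h1 : Filter.Tendsto (fun x : EuclideanSpace ℝ (Fin n) => ‖x‖)
      (Filter.comap (fun x : EuclideanSpace ℝ (Fin n) => ‖x‖) Filter.atTop)
      Filter.atTop := Filter.tendsto_comap
  exact Filter.tendsto_atTop_add_const_right _ (-C) h1 |>.congr (fun x => by ring)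
end

section
/- Let Ω ⊆ ℝⁿ be a nonempty closed convex set, and assume at least one of the sets Ω, Ω₁, …, Ω_m is bounded. Let {p_k} be a sequence of positive real numbers converging to 0, and for each k let y_k ∈ Ω satisfy D(y_k, p_k) ≤ D(x, p_k) for all x ∈ Ω. Then the sequence {y_k} is bounded, every limit of a convergent subsequence of {y_k} is a minimizer of D over Ω, and if D has a unique minimizer ȳ over Ω, then y_k → ȳ. -/
section aux

variable {n m : ℕ} (Ω : Fin m → Set (EuclideanSpace ℝ (Fin n)))

lemma dle_Dmax [Nonempty (Fin m)] (x : EuclideanSpace ℝ (Fin n)) (i : Fin m) :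
    Metric.infDist x (Ω i) ≤ Dmax Ω x := by
  unfold Dmax
  exact le_ciSup (f := fun i => Metric.infDist x (Ω i))
    (Set.Finite.bddAbove (Set.finite_range _)) i

lemma Dmax_le_Dsmooth [Nonempty (Fin m)] (x : EuclideanSpace ℝ (Fin n)) {q : ℝ} (hq : 0 < q) :
    Dmax Ω x ≤ Dsmooth Ω x q := by
  unfold Dmax Dsmooth
  have hSpos : 0 < ∑ i, Real.exp (Real.sqrt (Metric.infDist x (Ω i) ^ 2 + q ^ 2) / q) :=
    Finset.sum_pos (fun i _ => Real.exp_pos _) Finset.univ_nonempty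
  refine ciSup_le fun i => ?_
  have h1 : Real.exp (Real.sqrt (Metric.infDist x (Ω i) ^ 2 + q ^ 2) / q) ≤
      ∑ j, Real.exp (Real.sqrt (Metric.infDist x (Ω j) ^ 2 + q ^ 2) / q) :=
    Finset.single_le_sum
      (f := fun j => Real.exp (Real.sqrt (Metric.infDist x (Ω j) ^ 2 + q ^ 2) / q))
      (fun j _ => (Real.exp_pos _).le) (Finset.mem_univ i)
  have h2 : Real.sqrt (Metric.infDist x (Ω i) ^ 2 + q ^ 2) / q ≤
      Real.log (∑ j, Real.exp (Real.sqrt (Metric.infDist x (Ω j) ^ 2 + q ^ 2) / q)) :=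
    (Real.le_log_iff_exp_le hSpos).mpr h1
  have h3 : Real.sqrt (Metric.infDist x (Ω i) ^ 2 + q ^ 2) ≤
      Real.log (∑ j, Real.exp (Real.sqrt (Metric.infDist x (Ω j) ^ 2 + q ^ 2) / q)) * q := by
    rwa [div_le_iff₀ hq] at h2
  have h4 : Metric.infDist x (Ω i) ≤ Real.sqrt (Metric.infDist x (Ω i) ^ 2 + q ^ 2) := by
    have := Real.sqrt_le_sqrt (le_add_of_nonneg_right (sq_nonneg q) :
      Metric.infDist x (Ω i) ^ 2 ≤ Metric.infDist x (Ω i) ^ 2 + q ^ 2)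
    rwa [Real.sqrt_sq Metric.infDist_nonneg] at this
  linarith [h4.trans h3]

lemma Dsmooth_le [Nonempty (Fin m)] (x : EuclideanSpace ℝ (Fin n)) {q : ℝ} (hq : 0 < q) :
    Dsmooth Ω x q ≤ Dmax Ω x + q * (Real.log m + 1) := by
  unfold Dsmooth
  have hSpos : 0 < ∑ i, Real.exp (Real.sqrt (Metric.infDist x (Ω i) ^ 2 + q ^ 2) / q) :=
    Finset.sum_pos (fun i _ => Real.exp_pos _) Finset.univ_nonempty
  have hsq : ∀ i, Real.sqrt (Metric.infDist x (Ω i) ^ 2 + q ^ 2) ≤ Dmax Ω x + q := by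
    intro i
    have hd := Metric.infDist_nonneg (x := x) (s := Ω i)
    have h1 : Metric.infDist x (Ω i) ^ 2 + q ^ 2 ≤ (Metric.infDist x (Ω i) + q) ^ 2 := by
      nlinarith
    calc Real.sqrt (Metric.infDist x (Ω i) ^ 2 + q ^ 2)
        ≤ Real.sqrt ((Metric.infDist x (Ω i) + q) ^ 2) := Real.sqrt_le_sqrt h1
      _ = Metric.infDist x (Ω i) + q := Real.sqrt_sq (by linarith)
      _ ≤ Dmax Ω x + q := by linarith [dle_Dmax Ω x i]
  have hSle : (∑ i, Real.exp (Real.sqrt (Metric.infDist x (Ω i) ^ 2 + q ^ 2) / q)) ≤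
      (m : ℝ) * Real.exp ((Dmax Ω x + q) / q) := by
    calc (∑ i, Real.exp (Real.sqrt (Metric.infDist x (Ω i) ^ 2 + q ^ 2) / q))
        ≤ ∑ _i : Fin m, Real.exp ((Dmax Ω x + q) / q) := by
          refine Finset.sum_le_sum fun i _ => Real.exp_le_exp.mpr ?_
          gcongr
          exact hsq i
      _ = (m : ℝ) * Real.exp ((Dmax Ω x + q) / q) := by
          simp [Finset.sum_const, Finset.card_univ, nsmul_eq_mul]
  have hm0 : (0 : ℝ) < m := by exact_mod_cast Fin.pos ‹Nonempty (Fin m)›.some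
  have hlog : Real.log (∑ i, Real.exp (Real.sqrt (Metric.infDist x (Ω i) ^ 2 + q ^ 2) / q)) ≤
      Real.log m + (Dmax Ω x + q) / q := by
    have := Real.log_le_log hSpos hSle
    rwa [Real.log_mul (ne_of_gt hm0) (Real.exp_ne_zero _), Real.log_exp] at this
  have h2 : q * Real.log (∑ i, Real.exp (Real.sqrt (Metric.infDist x (Ω i) ^ 2 + q ^ 2) / q)) ≤
      q * (Real.log m + (Dmax Ω x + q) / q) :=
    mul_le_mul_of_nonneg_left hlog hq.le
  have h3 : q * (Real.log m + (Dmax Ω x + q) / q) = Dmax Ω x + q * (Real.log m + 1) := by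
    field_simp
    ring
  linarith [h3 ▸ h2]

end aux

/-- Let `Ω` be a nonempty closed convex constraint set, with at least one of
`Ω, Ω₁, …, Ω_m` bounded.  If `pₖ → 0⁺` and each `yₖ ∈ Ω` minimizes `D(·, pₖ)` over `Ω`,
then `{yₖ}` is bounded, every subsequential limit of `{yₖ}` minimizes `D` over `Ω`, and
if `D` has a unique minimizer `ȳ` over `Ω` then `yₖ → ȳ`. -/
theorem stmt_6 {n m : ℕ} (hm : 1 < m) (Om : Set (EuclideanSpace ℝ (Fin n)))
    (hOm : Om.Nonempty) (hOmcl : IsClosed Om) (hOmconv : Convex ℝ Om)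
    (Ω : Fin m → Set (EuclideanSpace ℝ (Fin n)))
    (hne : ∀ i, (Ω i).Nonempty) (hcl : ∀ i, IsClosed (Ω i)) (hconv : ∀ i, Convex ℝ (Ω i))
    (hbdd : Bornology.IsBounded Om ∨ ∃ i, Bornology.IsBounded (Ω i))
    (p : ℕ → ℝ) (hp : ∀ k, 0 < p k) (hp0 : Filter.Tendsto p Filter.atTop (nhds 0))
    (y : ℕ → EuclideanSpace ℝ (Fin n)) (hy : ∀ k, y k ∈ Om)
    (hymin : ∀ k, ∀ x ∈ Om, Dsmooth Ω (y k) (p k) ≤ Dsmooth Ω x (p k)) :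
    Bornology.IsBounded (Set.range y) ∧
    (∀ y₀ : EuclideanSpace ℝ (Fin n), ∀ φ : ℕ → ℕ, StrictMono φ →
      Filter.Tendsto (y ∘ φ) Filter.atTop (nhds y₀) →
      y₀ ∈ Om ∧ ∀ x ∈ Om, Dmax Ω y₀ ≤ Dmax Ω x) ∧
    (∀ ybar ∈ Om, (∀ x ∈ Om, Dmax Ω ybar ≤ Dmax Ω x) →
      (∀ z ∈ Om, (∀ x ∈ Om, Dmax Ω z ≤ Dmax Ω x) → z = ybar) →
      Filter.Tendsto y Filter.atTop (nhds ybar)) := by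
  have hm0 : 0 < m := by omega
  haveI : Nonempty (Fin m) := ⟨⟨0, hm0⟩⟩
  have hlogm : (0 : ℝ) ≤ Real.log m + 1 := by
    have h1 : (1 : ℝ) ≤ m := by exact_mod_cast hm0
    have := Real.log_nonneg h1
    linarith
  have bound : ∀ k, ∀ x ∈ Om, ∀ i,
      Metric.infDist (y k) (Ω i) ≤ Dmax Ω x + p k * (Real.log m + 1) := by
    intro k x hx i
    calc Metric.infDist (y k) (Ω i) ≤ Dmax Ω (y k) := dle_Dmax Ω (y k) i
      _ ≤ Dsmooth Ω (y k) (p k) := Dmax_le_Dsmooth Ω _ (hp k)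
      _ ≤ Dsmooth Ω x (p k) := hymin k x hx
      _ ≤ Dmax Ω x + p k * (Real.log m + 1) := Dsmooth_le Ω x (hp k)
  obtain ⟨P, hP⟩ : ∃ P, ∀ k, p k ≤ P := by
    obtain ⟨P, hP⟩ := hp0.bddAbove_range
    exact ⟨P, fun k => hP (Set.mem_range_self k)⟩
  have hbdd1 : Bornology.IsBounded (Set.range y) := by
    rcases hbdd with h | ⟨i, hi⟩
    · exact h.subset (Set.range_subset_iff.mpr hy)
    · obtain ⟨x₀, hx₀⟩ := hOm
      have hsub : Set.range y ⊆
          Metric.thickening (Dmax Ω x₀ + P * (Real.log m + 1) + 1) (Ω i) := by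
        rintro _ ⟨k, rfl⟩
        rw [Metric.mem_thickening_iff_infDist_lt (hne i)]
        have h1 := bound k x₀ hx₀ i
        have h2 : p k * (Real.log m + 1) ≤ P * (Real.log m + 1) :=
          mul_le_mul_of_nonneg_right (hP k) hlogm
        linarith
      exact (hi.cthickening (δ := Dmax Ω x₀ + P * (Real.log m + 1) + 1)).subset
        (hsub.trans (Metric.thickening_subset_cthickening _ _))
  refine ⟨hbdd1, ?_⟩
  have key : ∀ ψ : ℕ → ℕ, Filter.Tendsto ψ Filter.atTop Filter.atTop →
      ∀ y₀, Filter.Tendsto (fun k => y (ψ k)) Filter.atTop (nhds y₀) →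
      y₀ ∈ Om ∧ ∀ x ∈ Om, Dmax Ω y₀ ≤ Dmax Ω x := by
    intro ψ hψ y₀ hlim
    have hmem : y₀ ∈ Om :=
      hOmcl.mem_of_tendsto hlim (Filter.Eventually.of_forall fun k => hy _)
    refine ⟨hmem, fun x hx => ?_⟩
    have hgoal : ∀ i, Metric.infDist y₀ (Ω i) ≤ Dmax Ω x := by
      intro i
      have h1 : Filter.Tendsto (fun k => Metric.infDist (y (ψ k)) (Ω i)) Filter.atTop
          (nhds (Metric.infDist y₀ (Ω i))) :=
        ((Metric.continuous_infDist_pt (Ω i)).tendsto y₀).comp hlim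
      have h2 : Filter.Tendsto (fun k => Dmax Ω x + p (ψ k) * (Real.log m + 1)) Filter.atTop
          (nhds (Dmax Ω x)) := by
        have := Filter.Tendsto.const_add (Dmax Ω x)
          ((hp0.comp hψ).mul_const (Real.log m + 1))
        simpa using this
      exact le_of_tendsto_of_tendsto' h1 h2 fun k => bound (ψ k) x hx i
    unfold Dmax
    exact ciSup_le hgoal
  constructor
  · intro y₀ φ hφ hlim
    exact key φ hφ.tendsto_atTop y₀ hlim
  · intro ybar hybar hmin huniq
    refine Filter.tendsto_of_subseq_tendsto fun ns hns => ?_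
    obtain ⟨b, -, ms, hms, hblim⟩ :=
      tendsto_subseq_of_bounded hbdd1
        (fun k => Set.mem_range_self (ns k) : ∀ k, y (ns k) ∈ Set.range y)
    have hψ : Filter.Tendsto (fun k => ns (ms k)) Filter.atTop Filter.atTop :=
      hns.comp hms.tendsto_atTop
    have hb := key (fun k => ns (ms k)) hψ b hblim
    have hbeq : b = ybar := huniq b hb.1 hb.2
    exact ⟨ms, hbeq ▸ hblim⟩
end

section
/- Let c₁, …, c_m ∈ ℝⁿ with m > 1 and let p > 0. Then for every bounded convex set B ⊆ ℝⁿ, the function D(·, p) defined by D(x, p) := p ln Σ_{i=1}^m exp(g_i(x, p)/p), with g_i(x, p) := √(‖x − c_i‖² + p²), is strongly convex on B; that is, there exists c > 0 such that for all x, y ∈ B and λ ∈ (0, 1), D(λx + (1−λ)y, p) ≤ λ D(x, p) + (1−λ) D(y, p) − (c/2)λ(1−λ)‖x − y‖². -/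
open Real
set_option maxHeartbeats 1000000



/-- The log-exponential smoothing function in the singleton-target case:
`D(x, p) = p ln Σᵢ exp(√(‖x − cᵢ‖² + p²) / p)`. -/
noncomputable def Dpt {n m : ℕ} (c : Fin m → EuclideanSpace ℝ (Fin n))
    (x : EuclideanSpace ℝ (Fin n)) (p : ℝ) : ℝ :=
  p * Real.log (∑ i, Real.exp (Real.sqrt (‖x - c i‖ ^ 2 + p ^ 2) / p))


lemma real_core {p R l α β w Dd N : ℝ}
    (hp : 0 < p) (hR : 0 ≤ R) (hl0 : 0 < l) (hl1 : l < 1)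
    (hα0 : 0 ≤ α) (hβ0 : 0 ≤ β) (hw0 : 0 ≤ w) (hDd0 : 0 ≤ Dd) (hN0 : 0 ≤ N)
    (hαR : α ≤ R) (hβR : β ≤ R) (hwab : w ≤ α + β)
    (hid : N ^ 2 = l * α ^ 2 + (1 - l) * β ^ 2 - l * (1 - l) * Dd ^ 2)
    (hcs : |α ^ 2 - β ^ 2| ≤ Dd * w) :
    Real.sqrt (N ^ 2 + p ^ 2) ≤
      l * Real.sqrt (α ^ 2 + p ^ 2) + (1 - l) * Real.sqrt (β ^ 2 + p ^ 2)
        - (p ^ 2 / ((R ^ 2 + p ^ 2) * Real.sqrt (R ^ 2 + p ^ 2))) / 2 * l * (1 - l) * Dd ^ 2 := by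
  obtain ⟨gx, hgx⟩ : ∃ gx, gx = Real.sqrt (α ^ 2 + p ^ 2) := ⟨_, rfl⟩
  obtain ⟨gy, hgy⟩ : ∃ gy, gy = Real.sqrt (β ^ 2 + p ^ 2) := ⟨_, rfl⟩
  obtain ⟨S, hS⟩ : ∃ S, S = Real.sqrt (R ^ 2 + p ^ 2) := ⟨_, rfl⟩
  rw [← hgx, ← hgy, ← hS]
  have hgx2 : gx ^ 2 = α ^ 2 + p ^ 2 := by rw [hgx]; exact Real.sq_sqrt (by positivity)
  have hgy2 : gy ^ 2 = β ^ 2 + p ^ 2 := by rw [hgy]; exact Real.sq_sqrt (by positivity)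
  have hS2 : S ^ 2 = R ^ 2 + p ^ 2 := by rw [hS]; exact Real.sq_sqrt (by positivity)
  have hgxp : p ≤ gx := by
    rw [hgx, Real.le_sqrt hp.le (by positivity)]; linarith [sq_nonneg α]
  have hgyp : p ≤ gy := by
    rw [hgy, Real.le_sqrt hp.le (by positivity)]; linarith [sq_nonneg β]
  have hgxS : gx ≤ S := by
    rw [hgx, hS]
    exact Real.sqrt_le_sqrt (by linarith [mul_self_le_mul_self hα0 hαR, sq_abs α, sq_abs R])
  have hgyS : gy ≤ S := by
    rw [hgy, hS]
    exact Real.sqrt_le_sqrt (by linarith [mul_self_le_mul_self hβ0 hβR])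
  have hSpos : 0 < S := lt_of_lt_of_le hp (le_trans hgxp hgxS)
  have hgx0 : 0 < gx := lt_of_lt_of_le hp hgxp
  have hgy0 : 0 < gy := lt_of_lt_of_le hp hgyp
  -- lower bound on gx * gy
  have hgxgy : α * β + p ^ 2 ≤ gx * gy := by
    have e : gx * gy = Real.sqrt ((α ^ 2 + p ^ 2) * (β ^ 2 + p ^ 2)) := by
      rw [hgx, hgy, ← Real.sqrt_mul (by positivity)]
    rw [e, show α * β + p ^ 2 = Real.sqrt ((α * β + p ^ 2) ^ 2) from
      (Real.sqrt_sq (by positivity)).symm]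
    exact Real.sqrt_le_sqrt (by linarith [sq_nonneg (α * p - β * p)])
  have hsum : w ^ 2 + 4 * p ^ 2 ≤ (gx + gy) ^ 2 := by
    linarith [mul_self_le_mul_self hw0 hwab, mul_le_mul_of_nonneg_left hgxgy (by norm_num : (0:ℝ) ≤ 2), hgx2, hgy2]
  -- key quadratic bound
  have hkey2 : (gx - gy) ^ 2 * (R ^ 2 + p ^ 2) ≤ R ^ 2 * Dd ^ 2 := by
    have h1 : |gx - gy| * (gx + gy) ≤ Dd * w := by
      have e1 : |gx - gy| * (gx + gy) = |gx ^ 2 - gy ^ 2| := by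
        rw [← abs_of_nonneg (by positivity : (0:ℝ) ≤ gx + gy), ← abs_mul]; ring_nf
      have e2 : gx ^ 2 - gy ^ 2 = α ^ 2 - β ^ 2 := by rw [hgx2, hgy2]; ring
      rw [e1, e2]; exact hcs
    have h2 : (gx - gy) ^ 2 * (gx + gy) ^ 2 ≤ Dd ^ 2 * w ^ 2 := by
      have := mul_le_mul h1 h1 (by positivity) (by positivity)
      calc (gx - gy) ^ 2 * (gx + gy) ^ 2
          = (|gx - gy| * (gx + gy)) * (|gx - gy| * (gx + gy)) := by rw [← sq_abs]; ring
        _ ≤ (Dd * w) * (Dd * w) := this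
        _ = Dd ^ 2 * w ^ 2 := by ring
    have h3 : (gx - gy) ^ 2 * (w ^ 2 + 4 * p ^ 2) ≤ Dd ^ 2 * w ^ 2 :=
      le_trans (mul_le_mul_of_nonneg_left hsum (sq_nonneg (gx - gy))) h2
    have hw2R : w ≤ 2 * R := by linarith
    have h4 : w ^ 2 * (R ^ 2 + p ^ 2) ≤ R ^ 2 * (w ^ 2 + 4 * p ^ 2) := by
      linarith [mul_le_mul_of_nonneg_right (mul_self_le_mul_self hw0 hw2R) (sq_nonneg p)]
    have hpos : (0:ℝ) < w ^ 2 + 4 * p ^ 2 := by positivity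
    have h5 := mul_le_mul_of_nonneg_right h3 (by positivity : (0:ℝ) ≤ R ^ 2 + p ^ 2)
    have h6 := mul_le_mul_of_nonneg_left h4 (sq_nonneg Dd)
    exact le_of_mul_le_mul_right (by linarith [h5, h6]) hpos
  obtain ⟨s, hs⟩ : ∃ s, s = l * gx + (1 - l) * gy := ⟨_, rfl⟩
  have hspos : 0 < s := by
    rw [hs]
    linarith [mul_le_mul_of_nonneg_left hgxp hl0.le,
      mul_le_mul_of_nonneg_left hgyp (by linarith : (0:ℝ) ≤ 1 - l)]
  have hsS : s ≤ S := by
    rw [hs]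
    linarith [mul_le_mul_of_nonneg_left hgxS hl0.le,
      mul_le_mul_of_nonneg_left hgyS (by linarith : (0:ℝ) ≤ 1 - l)]
  obtain ⟨T, hT⟩ : ∃ T, T = l * (1 - l) * (p ^ 2 / (R ^ 2 + p ^ 2)) * Dd ^ 2 := ⟨_, rfl⟩
  have hRp2 : (0:ℝ) < R ^ 2 + p ^ 2 := by positivity
  have hl' : 0 ≤ l * (1 - l) := mul_nonneg hl0.le (by linarith)
  have hT0 : 0 ≤ T := by
    rw [hT]; exact mul_nonneg (mul_nonneg hl' (by positivity)) (sq_nonneg Dd)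
  have hgz2 : N ^ 2 + p ^ 2 = s ^ 2 - l * (1 - l) * (Dd ^ 2 - (gx - gy) ^ 2) := by
    rw [hid, hs]; linear_combination (-l) * hgx2 - (1 - l) * hgy2
  have hdelta : T ≤ l * (1 - l) * (Dd ^ 2 - (gx - gy) ^ 2) := by
    have h8 : p ^ 2 / (R ^ 2 + p ^ 2) * Dd ^ 2 ≤ Dd ^ 2 - (gx - gy) ^ 2 := by
      rw [div_mul_eq_mul_div, div_le_iff₀ hRp2]; linarith [hkey2]
    have h9 := mul_le_mul_of_nonneg_left h8 hl'
    rw [hT, show l * (1 - l) * (p ^ 2 / (R ^ 2 + p ^ 2)) * Dd ^ 2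
      = l * (1 - l) * (p ^ 2 / (R ^ 2 + p ^ 2) * Dd ^ 2) from by ring]
    exact h9
  have hbound : N ^ 2 + p ^ 2 ≤ s ^ 2 - T := by rw [hgz2]; linarith
  have hTs2 : T ≤ s ^ 2 := by linarith [hbound, sq_nonneg N, sq_nonneg p]
  have hstep : Real.sqrt (N ^ 2 + p ^ 2) ≤ s - T / (2 * s) := by
    have hrhs0 : 0 ≤ s - T / (2 * s) := by
      rw [sub_nonneg, div_le_iff₀ (by positivity : (0:ℝ) < 2 * s)]
      linarith [hTs2, sq_nonneg s]
    have hsq : N ^ 2 + p ^ 2 ≤ (s - T / (2 * s)) ^ 2 := by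
      have e : (s - T / (2 * s)) ^ 2 = s ^ 2 - T + (T / (2 * s)) ^ 2 := by
        field_simp; ring
      rw [e]; linarith [sq_nonneg (T / (2 * s))]
    calc Real.sqrt (N ^ 2 + p ^ 2) ≤ Real.sqrt ((s - T / (2 * s)) ^ 2) := Real.sqrt_le_sqrt hsq
      _ = s - T / (2 * s) := Real.sqrt_sq hrhs0
  have hfinal : (p ^ 2 / ((R ^ 2 + p ^ 2) * S)) / 2 * l * (1 - l) * Dd ^ 2 ≤ T / (2 * s) := by
    rw [le_div_iff₀ (by positivity : (0:ℝ) < 2 * s), hT]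
    have hcs' : p ^ 2 / ((R ^ 2 + p ^ 2) * S) * s ≤ p ^ 2 / (R ^ 2 + p ^ 2) := by
      calc p ^ 2 / ((R ^ 2 + p ^ 2) * S) * s ≤ p ^ 2 / ((R ^ 2 + p ^ 2) * S) * S :=
            mul_le_mul_of_nonneg_left hsS (by positivity)
        _ = p ^ 2 / (R ^ 2 + p ^ 2) := by field_simp
    calc p ^ 2 / ((R ^ 2 + p ^ 2) * S) / 2 * l * (1 - l) * Dd ^ 2 * (2 * s)
        = (p ^ 2 / ((R ^ 2 + p ^ 2) * S) * s) * (l * (1 - l) * Dd ^ 2) := by ring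
      _ ≤ p ^ 2 / (R ^ 2 + p ^ 2) * (l * (1 - l) * Dd ^ 2) :=
          mul_le_mul_of_nonneg_right hcs' (mul_nonneg hl' (sq_nonneg Dd))
      _ = l * (1 - l) * (p ^ 2 / (R ^ 2 + p ^ 2)) * Dd ^ 2 := by ring
  calc Real.sqrt (N ^ 2 + p ^ 2) ≤ s - T / (2 * s) := hstep
    _ ≤ l * gx + (1 - l) * gy
        - p ^ 2 / ((R ^ 2 + p ^ 2) * S) / 2 * l * (1 - l) * Dd ^ 2 := by rw [← hs]; linarith

lemma sqrt_strong_convex {E : Type*} [NormedAddCommGroup E] [InnerProductSpace ℝ E]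
    (a x y : E) {p R l : ℝ} (hp : 0 < p) (hR : 0 ≤ R)
    (hx : ‖x - a‖ ≤ R) (hy : ‖y - a‖ ≤ R) (hl0 : 0 < l) (hl1 : l < 1) :
    Real.sqrt (‖(l • x + (1 - l) • y) - a‖ ^ 2 + p ^ 2) ≤
      l * Real.sqrt (‖x - a‖ ^ 2 + p ^ 2) + (1 - l) * Real.sqrt (‖y - a‖ ^ 2 + p ^ 2)
        - (p ^ 2 / ((R ^ 2 + p ^ 2) * Real.sqrt (R ^ 2 + p ^ 2))) / 2 * l * (1 - l) * ‖x - y‖ ^ 2 := by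
  have hcomb : (l • x + (1 - l) • y) - a = l • (x - a) + (1 - l) • (y - a) := by module
  have hxy : x - y = (x - a) - (y - a) := by abel
  rw [hcomb, hxy]
  set u := x - a
  set v := y - a
  have hid : ‖l • u + (1 - l) • v‖ ^ 2
      = l * ‖u‖ ^ 2 + (1 - l) * ‖v‖ ^ 2 - l * (1 - l) * ‖u - v‖ ^ 2 := by
    have h1 := norm_add_sq_real (l • u) ((1 - l) • v)
    have h2 := norm_sub_sq_real u v
    rw [norm_smul, norm_smul, real_inner_smul_left, real_inner_smul_right,
      Real.norm_eq_abs, Real.norm_eq_abs, abs_of_pos hl0,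
      abs_of_pos (by linarith : (0:ℝ) < 1 - l)] at h1
    rw [h1, h2]; ring
  have hcs : |‖u‖ ^ 2 - ‖v‖ ^ 2| ≤ ‖u - v‖ * ‖u + v‖ := by
    have hdiff : ‖u‖ ^ 2 - ‖v‖ ^ 2 = (inner ℝ (u - v) (u + v) : ℝ) := by
      rw [inner_sub_left, inner_add_right, inner_add_right, real_inner_comm v u,
        real_inner_self_eq_norm_sq, real_inner_self_eq_norm_sq]
      ring
    rw [hdiff]; exact abs_real_inner_le_norm _ _
  exact real_core hp hR hl0 hl1 (norm_nonneg u) (norm_nonneg v) (norm_nonneg _)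
    (norm_nonneg _) (norm_nonneg _) hx hy (norm_add_le u v) hid hcs

lemma holder_two {ι : Type*} [Fintype ι] [Nonempty ι] (A B : ι → ℝ)
    (hA : ∀ i, 0 < A i) (hB : ∀ i, 0 < B i) {l : ℝ} (hl0 : 0 < l) (hl1 : l < 1) :
    ∑ i, (A i) ^ l * (B i) ^ (1 - l) ≤ (∑ i, A i) ^ l * (∑ i, B i) ^ (1 - l) := by
  have hSA : 0 < ∑ i, A i := Finset.sum_pos (fun i _ => hA i) Finset.univ_nonempty
  have hSB : 0 < ∑ i, B i := Finset.sum_pos (fun i _ => hB i) Finset.univ_nonempty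
  have hP : 0 < (∑ i, A i) ^ l * (∑ i, B i) ^ (1 - l) :=
    mul_pos (Real.rpow_pos_of_pos hSA l) (Real.rpow_pos_of_pos hSB (1 - l))
  have key : ∀ i : ι, (A i) ^ l * (B i) ^ (1 - l) ≤
      ((∑ j, A j) ^ l * (∑ j, B j) ^ (1 - l)) *
        (l * (A i / ∑ j, A j) + (1 - l) * (B i / ∑ j, B j)) := by
    intro i
    have hgm : (A i / ∑ j, A j) ^ l * (B i / ∑ j, B j) ^ (1 - l) ≤
        l * (A i / ∑ j, A j) + (1 - l) * (B i / ∑ j, B j) :=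
      Real.geom_mean_le_arith_mean2_weighted hl0.le (by linarith : (0:ℝ) ≤ 1 - l)
        (div_nonneg (hA i).le hSA.le) (div_nonneg (hB i).le hSB.le) (by ring)
    have e : (A i / ∑ j, A j) ^ l * (B i / ∑ j, B j) ^ (1 - l) =
        ((A i) ^ l * (B i) ^ (1 - l)) / ((∑ j, A j) ^ l * (∑ j, B j) ^ (1 - l)) := by
      rw [Real.div_rpow (hA i).le hSA.le, Real.div_rpow (hB i).le hSB.le]
      ring
    rw [e, div_le_iff₀ hP] at hgm
    linarith [hgm]
  calc ∑ i, (A i) ^ l * (B i) ^ (1 - l)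
      ≤ ∑ i, ((∑ j, A j) ^ l * (∑ j, B j) ^ (1 - l)) *
          (l * (A i / ∑ j, A j) + (1 - l) * (B i / ∑ j, B j)) :=
        Finset.sum_le_sum (fun i _ => key i)
    _ = (∑ i, A i) ^ l * (∑ i, B i) ^ (1 - l) := by
        rw [← Finset.mul_sum]
        have : ∑ i, (l * (A i / ∑ j, A j) + (1 - l) * (B i / ∑ j, B j)) = 1 := by
          rw [Finset.sum_add_distrib, ← Finset.mul_sum, ← Finset.mul_sum,
            ← Finset.sum_div, ← Finset.sum_div, div_self hSA.ne', div_self hSB.ne']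
          ring
        rw [this, mul_one]

lemma lse_combine {ι : Type*} [Fintype ι] [Nonempty ι] {p M l : ℝ} (hp : 0 < p)
    (hl0 : 0 < l) (hl1 : l < 1) (gz gx gy : ι → ℝ)
    (hkey : ∀ i, gz i ≤ l * gx i + (1 - l) * gy i - M) :
    p * Real.log (∑ i, Real.exp (gz i / p)) ≤
      l * (p * Real.log (∑ i, Real.exp (gx i / p)))
        + (1 - l) * (p * Real.log (∑ i, Real.exp (gy i / p))) - M := by
  obtain ⟨A, hA⟩ : ∃ A : ι → ℝ, A = fun i => Real.exp (gx i / p) := ⟨_, rfl⟩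
  obtain ⟨Bf, hBf⟩ : ∃ Bf : ι → ℝ, Bf = fun i => Real.exp (gy i / p) := ⟨_, rfl⟩
  rw [← hA, ← hBf]
  have hApos : ∀ i, 0 < A i := fun i => hA ▸ Real.exp_pos _
  have hBpos : ∀ i, 0 < Bf i := fun i => hBf ▸ Real.exp_pos _
  have hSA : 0 < ∑ i, A i := Finset.sum_pos (fun i _ => hApos i) Finset.univ_nonempty
  have hSB : 0 < ∑ i, Bf i := Finset.sum_pos (fun i _ => hBpos i) Finset.univ_nonempty
  have hterm : ∀ i : ι, Real.exp (gz i / p) ≤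
      Real.exp (-(M / p)) * ((A i) ^ l * (Bf i) ^ (1 - l)) := by
    intro i
    have h1 : gz i / p ≤ (l * gx i + (1 - l) * gy i - M) / p :=
      (div_le_div_iff_of_pos_right hp).2 (hkey i)
    refine le_trans (Real.exp_le_exp.2 h1) (le_of_eq ?_)
    rw [hA, hBf]
    rw [show (l * gx i + (1 - l) * gy i - M) / p
        = -(M / p) + ((gx i / p) * l + (gy i / p) * (1 - l)) from by field_simp; ring,
      Real.exp_add, Real.exp_add, Real.exp_mul, Real.exp_mul]
  have hsum : ∑ i, Real.exp (gz i / p) ≤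
      Real.exp (-(M / p)) * ((∑ i, A i) ^ l * (∑ i, Bf i) ^ (1 - l)) := by
    calc ∑ i, Real.exp (gz i / p)
        ≤ ∑ i, Real.exp (-(M / p)) * ((A i) ^ l * (Bf i) ^ (1 - l)) :=
          Finset.sum_le_sum (fun i _ => hterm i)
      _ = Real.exp (-(M / p)) * ∑ i, (A i) ^ l * (Bf i) ^ (1 - l) := by
          rw [← Finset.mul_sum]
      _ ≤ Real.exp (-(M / p)) * ((∑ i, A i) ^ l * (∑ i, Bf i) ^ (1 - l)) :=
          mul_le_mul_of_nonneg_left (holder_two A Bf hApos hBpos hl0 hl1) (Real.exp_pos _).le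
  have hSz : 0 < ∑ i, Real.exp (gz i / p) :=
    Finset.sum_pos (fun i _ => Real.exp_pos _) Finset.univ_nonempty
  have hlog : Real.log (∑ i, Real.exp (gz i / p))
      ≤ -(M / p) + (l * Real.log (∑ i, A i) + (1 - l) * Real.log (∑ i, Bf i)) := by
    have h3 := Real.log_le_log hSz hsum
    rw [Real.log_mul (Real.exp_ne_zero _)
        (by positivity : ((∑ i, A i) ^ l * (∑ i, Bf i) ^ (1 - l)) ≠ 0),
      Real.log_exp, Real.log_mul (by positivity) (by positivity),
      Real.log_rpow hSA, Real.log_rpow hSB] at h3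
    linarith [h3]
  have h4 := mul_le_mul_of_nonneg_left hlog hp.le
  calc p * Real.log (∑ i, Real.exp (gz i / p))
      ≤ p * (-(M / p) + (l * Real.log (∑ i, A i) + (1 - l) * Real.log (∑ i, Bf i))) := h4
    _ = l * (p * Real.log (∑ i, A i)) + (1 - l) * (p * Real.log (∑ i, Bf i)) - M := by
        field_simp; ring

/-- For points `c₁, …, c_m` (`m > 1`) and `p > 0`, the function `D(·, p)` is
strongly convex on any bounded convex set `B`: there is `c > 0` such that for all
`x, y ∈ B` and `λ ∈ (0, 1)`,
`D(λx + (1−λ)y, p) ≤ λ D(x, p) + (1−λ) D(y, p) − (c/2)λ(1−λ)‖x − y‖²`. -/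
theorem stmt_7 {n m : ℕ} (hm : 1 < m) (c : Fin m → EuclideanSpace ℝ (Fin n))
    (p : ℝ) (hp : 0 < p) (B : Set (EuclideanSpace ℝ (Fin n)))
    (hBconv : Convex ℝ B) (hBbdd : Bornology.IsBounded B) :
    ∃ cst > (0 : ℝ), ∀ x ∈ B, ∀ y ∈ B, ∀ l ∈ Set.Ioo (0 : ℝ) 1,
      Dpt c (l • x + (1 - l) • y) p ≤
        l * Dpt c x p + (1 - l) * Dpt c y p - cst / 2 * l * (1 - l) * ‖x - y‖ ^ 2 := by
  haveI : Nonempty (Fin m) := ⟨⟨0, by omega⟩⟩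
  obtain ⟨C, hC⟩ := hBbdd.exists_norm_le
  obtain ⟨R, hRdef⟩ : ∃ R : ℝ, R = |C| + ∑ i, ‖c i‖ := ⟨_, rfl⟩
  have hR : 0 ≤ R := by rw [hRdef]; positivity
  have hball : ∀ z ∈ B, ∀ i, ‖z - c i‖ ≤ R := by
    intro z hz i
    rw [hRdef]
    calc ‖z - c i‖ ≤ ‖z‖ + ‖c i‖ := norm_sub_le z (c i)
      _ ≤ |C| + ∑ j, ‖c j‖ := by
          gcongr
          · exact le_trans (hC z hz) (le_abs_self C)
          · exact Finset.single_le_sum (fun j _ => norm_nonneg (c j)) (Finset.mem_univ i)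
  have hRp2 : (0:ℝ) < R ^ 2 + p ^ 2 := by positivity
  have hSpos : (0:ℝ) < Real.sqrt (R ^ 2 + p ^ 2) := Real.sqrt_pos.2 hRp2
  refine ⟨p ^ 2 / ((R ^ 2 + p ^ 2) * Real.sqrt (R ^ 2 + p ^ 2)),
    div_pos (by positivity) (mul_pos hRp2 hSpos), ?_⟩
  intro x hx y hy l hl
  obtain ⟨hl0, hl1⟩ := hl
  have hkey : ∀ i : Fin m,
      Real.sqrt (‖(l • x + (1 - l) • y) - c i‖ ^ 2 + p ^ 2) ≤
        l * Real.sqrt (‖x - c i‖ ^ 2 + p ^ 2) + (1 - l) * Real.sqrt (‖y - c i‖ ^ 2 + p ^ 2)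
          - (p ^ 2 / ((R ^ 2 + p ^ 2) * Real.sqrt (R ^ 2 + p ^ 2))) / 2 * l * (1 - l)
            * ‖x - y‖ ^ 2 :=
    fun i => sqrt_strong_convex (c i) x y hp hR (hball x hx i) (hball y hy i) hl0 hl1
  exact lse_combine hp hl0 hl1
    (fun i => Real.sqrt (‖(l • x + (1 - l) • y) - c i‖ ^ 2 + p ^ 2))
    (fun i => Real.sqrt (‖x - c i‖ ^ 2 + p ^ 2))
    (fun i => Real.sqrt (‖y - c i‖ ^ 2 + p ^ 2)) hkey
end

section
/- Let c₁, …, c_m ∈ ℝⁿ with m ≥ 1 and let p > 0. Then the function x ↦ D(x, p) := p ln Σ_{i=1}^m exp(g_i(x, p)/p), with g_i(x, p) := √(‖x − c_i‖² + p²), is differentiable on ℝⁿ and its gradient is globally Lipschitz continuous with Lipschitz constant 2/p: ‖∇_x D(x, p) − ∇_x D(y, p)‖ ≤ (2/p)‖x − y‖ for all x, y ∈ ℝⁿ. -/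
open Real Finset
open scoped RealInnerProductSpace

lemma lse1d {m : ℕ} (w t : Fin m → ℝ) (hw : ∀ i, 0 < w i) (hsum : ∑ i, w i = 1)
    (r : ℝ) (ht : ∀ i, |t i| ≤ r) :
    Real.log (∑ i, w i * Real.exp (t i)) ≤ (∑ i, w i * t i) + r ^ 2 / 2 := by
  have hne : (univ : Finset (Fin m)).Nonempty := by
    rcases (univ : Finset (Fin m)).eq_empty_or_nonempty with h | h
    · rw [h] at hsum; simp at hsum
    · exact h
  set ρ : ℝ → ℝ := fun s => ∑ i, w i * Real.exp (t i * s) with hρ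
  set ρ1 : ℝ → ℝ := fun s => ∑ i, w i * t i * Real.exp (t i * s) with hρ1
  set ρ2 : ℝ → ℝ := fun s => ∑ i, w i * t i ^ 2 * Real.exp (t i * s) with hρ2
  have hρpos : ∀ s, 0 < ρ s := fun s =>
    Finset.sum_pos (fun i _ => mul_pos (hw i) (Real.exp_pos _)) hne
  have hρd : ∀ s, HasDerivAt ρ (ρ1 s) s := by
    intro s
    have : ∀ i ∈ univ, HasDerivAt (fun s => w i * Real.exp (t i * s))
        (w i * t i * Real.exp (t i * s)) s := by
      intro i _
      have h1 : HasDerivAt (fun s : ℝ => t i * s) (t i) s := by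
        simpa using (hasDerivAt_id s).const_mul (t i)
      have := (h1.exp).const_mul (w i)
      exact this.congr_deriv (by ring)
    simpa using HasDerivAt.fun_sum this
  have hρ1d : ∀ s, HasDerivAt ρ1 (ρ2 s) s := by
    intro s
    have : ∀ i ∈ univ, HasDerivAt (fun s => w i * t i * Real.exp (t i * s))
        (w i * t i ^ 2 * Real.exp (t i * s)) s := by
      intro i _
      have h1 : HasDerivAt (fun s : ℝ => t i * s) (t i) s := by
        simpa using (hasDerivAt_id s).const_mul (t i)
      have := (h1.exp).const_mul (w i * t i)
      exact this.congr_deriv (by ring)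
    simpa using HasDerivAt.fun_sum this
  have hr0 : 0 ≤ r := by
    obtain ⟨i0, _⟩ := hne
    exact le_trans (abs_nonneg _) (ht i0)
  have hφ'd : ∀ s, HasDerivAt (fun s => ρ1 s / ρ s)
      ((ρ2 s * ρ s - ρ1 s * ρ1 s) / ρ s ^ 2) s := by
    intro s
    exact (hρ1d s).div (hρd s) (hρpos s).ne'
  have hsecond : ∀ s, (ρ2 s * ρ s - ρ1 s * ρ1 s) / ρ s ^ 2 ≤ r ^ 2 := by
    intro s
    have h2 : ρ2 s ≤ r ^ 2 * ρ s := by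
      rw [hρ2, hρ, Finset.mul_sum]
      apply Finset.sum_le_sum
      intro i _
      have hti := abs_le.mp (ht i)
      have ht2 : t i ^ 2 ≤ r ^ 2 := sq_le_sq' hti.1 hti.2
      have he := Real.exp_pos (t i * s)
      nlinarith [mul_pos (hw i) he, (hw i).le, he.le]
    rw [div_le_iff₀ (pow_pos (hρpos s) 2)]
    nlinarith [mul_self_nonneg (ρ1 s), hρpos s]
  -- first layer: ζ s = r^2 s - ρ1 s / ρ s is monotone
  have hζmono : Monotone (fun s => r ^ 2 * s - ρ1 s / ρ s) := by
    apply monotone_of_deriv_nonneg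
    · intro s
      exact (((hasDerivAt_id s).const_mul (r ^ 2)).sub (hφ'd s)).differentiableAt
    · intro s
      have hd : HasDerivAt (fun s => r ^ 2 * s - ρ1 s / ρ s)
          (r ^ 2 * 1 - (ρ2 s * ρ s - ρ1 s * ρ1 s) / ρ s ^ 2) s :=
        ((hasDerivAt_id s).const_mul (r ^ 2)).sub (hφ'd s)
      rw [hd.deriv]
      have := hsecond s
      linarith
  have hφ'bound : ∀ s ∈ Set.Icc (0:ℝ) 1, ρ1 s / ρ s ≤ ρ1 0 / ρ 0 + r ^ 2 * s := by
    intro s hs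
    have := hζmono hs.1
    simp only [mul_zero] at this
    linarith
  -- second layer: η s = (ρ1 0 / ρ 0) s + r^2 s^2/2 - log (ρ s) is monotone on [0,1]
  have hηd : ∀ s, HasDerivAt (fun s => (ρ1 0 / ρ 0) * s + r ^ 2 * s ^ 2 / 2 - Real.log (ρ s))
      (ρ1 0 / ρ 0 + r ^ 2 * s - ρ1 s / ρ s) s := by
    intro s
    have h1 : HasDerivAt (fun s : ℝ => (ρ1 0 / ρ 0) * s) (ρ1 0 / ρ 0) s := by
      simpa using (hasDerivAt_id s).const_mul (ρ1 0 / ρ 0)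
    have h2 : HasDerivAt (fun s : ℝ => r ^ 2 * s ^ 2 / 2) (r ^ 2 * s) s := by
      have := ((hasDerivAt_pow 2 s).const_mul (r ^ 2)).div_const 2
      exact this.congr_deriv (by ring)
    have h3 : HasDerivAt (fun s => Real.log (ρ s)) (ρ1 s / ρ s) s :=
      (hρd s).log (hρpos s).ne'
    exact (h1.add h2).sub h3
  have hηmono : MonotoneOn (fun s => (ρ1 0 / ρ 0) * s + r ^ 2 * s ^ 2 / 2 - Real.log (ρ s))
      (Set.Icc (0:ℝ) 1) := by
    apply monotoneOn_of_deriv_nonneg (convex_Icc 0 1)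
    · exact (Differentiable.continuous (fun s => (hηd s).differentiableAt)).continuousOn
    · intro s _
      exact (hηd s).differentiableAt.differentiableWithinAt
    · intro s hs
      rw [interior_Icc] at hs
      rw [(hηd s).deriv]
      have := hφ'bound s ⟨hs.1.le, hs.2.le⟩
      linarith
  have key := hηmono (Set.left_mem_Icc.mpr zero_le_one) (Set.right_mem_Icc.mpr zero_le_one)
      zero_le_one
  have hρ0 : ρ 0 = 1 := by simp [hρ, hsum]
  have hρ10 : ρ1 0 = ∑ i, w i * t i := by simp [hρ1]
  have hρ1v : ρ 1 = ∑ i, w i * Real.exp (t i) := by simp [hρ]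
  rw [hρ0] at key
  simp only [mul_zero, mul_one, Real.log_one, zero_pow, sub_zero, one_pow] at key
  rw [hρ10, hρ1v, div_one] at key
  -- key : 0 - log 1 ≤ (∑ w t) * 1 + r^2 * 1^2/2 - log (ρ 1)  roughly
  norm_num at key
  rw [hρ0, Real.log_one] at key
  linarith

variable {F : Type*} [NormedAddCommGroup F] [InnerProductSpace ℝ F]

lemma jensen_exp {m : ℕ} (w t : Fin m → ℝ) (hw : ∀ i, 0 < w i) (hsum : ∑ i, w i = 1) :
    (∑ i, w i * t i) ≤ Real.log (∑ i, w i * Real.exp (t i)) := by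
  obtain ⟨T, hT⟩ : ∃ T : ℝ, (∑ i, w i * t i) = T := ⟨_, rfl⟩
  rw [hT]
  have key : Real.exp T ≤ ∑ i, w i * Real.exp (t i) := by
    have hterm : ∀ i ∈ univ, w i * Real.exp T * (1 + (t i - T)) ≤ w i * Real.exp (t i) := by
      intro i _
      have h1 := Real.add_one_le_exp (t i - T)
      have h2 : Real.exp (t i) = Real.exp T * Real.exp (t i - T) := by
        rw [← Real.exp_add]; ring_nf
      rw [h2]
      have h3 := Real.exp_pos T
      nlinarith [mul_le_mul_of_nonneg_left h1 (mul_nonneg (hw i).le h3.le)]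
    have hsplit : (∑ i, w i * Real.exp T * (1 + (t i - T))) =
        Real.exp T * (∑ i, w i) + Real.exp T * (∑ i, w i * t i)
          - Real.exp T * T * (∑ i, w i) := by
      rw [Finset.mul_sum, Finset.mul_sum, Finset.mul_sum, ← Finset.sum_add_distrib,
        ← Finset.sum_sub_distrib]
      exact Finset.sum_congr rfl fun i _ => by ring
    calc Real.exp T = ∑ i, w i * Real.exp T * (1 + (t i - T)) := by
          rw [hsplit, hsum, hT]; ring
      _ ≤ _ := Finset.sum_le_sum hterm
  calc T = Real.log (Real.exp T) := (Real.log_exp T).symm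
    _ ≤ _ := Real.log_le_log (Real.exp_pos T) key

lemma g_upper (u d : F) {p : ℝ} (hp : 0 < p) :
    Real.sqrt (‖u + d‖ ^ 2 + p ^ 2) ≤
      Real.sqrt (‖u‖ ^ 2 + p ^ 2) + ⟪u, d⟫ / Real.sqrt (‖u‖ ^ 2 + p ^ 2)
        + ‖d‖ ^ 2 / (2 * p) := by
  set G := Real.sqrt (‖u‖ ^ 2 + p ^ 2) with hG
  have hG2 : G ^ 2 = ‖u‖ ^ 2 + p ^ 2 := Real.sq_sqrt (by positivity)
  have hGnn : 0 ≤ G := Real.sqrt_nonneg _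
  have hGp : p ≤ G := by nlinarith [sq_nonneg ‖u‖]
  have hGpos : 0 < G := lt_of_lt_of_le hp hGp
  have hGu : ‖u‖ ≤ G := by nlinarith [sq_nonneg p, norm_nonneg u]
  set a := ⟪u, d⟫ with ha
  set D := ‖d‖ ^ 2 with hD
  have hD0 : 0 ≤ D := by positivity
  have haabs : |a| ≤ ‖u‖ * ‖d‖ := abs_real_inner_le_norm u d
  have hRHS : 0 ≤ G + a / G + D / (2 * p) := by
    have h1 : -(G * ‖d‖) ≤ a := by
      have := neg_abs_le a
      nlinarith [norm_nonneg d]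
    have h2 : -‖d‖ ≤ a / G := by
      rw [le_div_iff₀ hGpos]; nlinarith
    have h4 : ‖d‖ - p ≤ D / (2 * p) := by
      rw [le_div_iff₀ (by positivity)]
      nlinarith [sq_nonneg (‖d‖ - p)]
    linarith
  have hL : ‖u + d‖ ^ 2 + p ^ 2 = G ^ 2 + 2 * a + D := by
    rw [hG2, hD, ha, norm_add_sq_real]; ring
  have hkey : (G + a / G + D / (2 * p)) ^ 2 - (G ^ 2 + 2 * a + D) =
      (a / G + D / (2 * p)) ^ 2 + D * (G - p) / p := by
    field_simp
    ring
  have hsq : ‖u + d‖ ^ 2 + p ^ 2 ≤ (G + a / G + D / (2 * p)) ^ 2 := by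
    rw [hL]
    have e1 : (0:ℝ) ≤ (a / G + D / (2 * p)) ^ 2 := sq_nonneg _
    have e2 : (0:ℝ) ≤ D * (G - p) / p := div_nonneg (mul_nonneg hD0 (by linarith)) hp.le
    linarith [hkey]
  calc Real.sqrt (‖u + d‖ ^ 2 + p ^ 2) ≤ Real.sqrt ((G + a / G + D / (2 * p)) ^ 2) :=
        Real.sqrt_le_sqrt hsq
    _ = G + a / G + D / (2 * p) := Real.sqrt_sq hRHS

lemma g_lower (u d : F) {p : ℝ} (hp : 0 < p) :
    Real.sqrt (‖u‖ ^ 2 + p ^ 2) + ⟪u, d⟫ / Real.sqrt (‖u‖ ^ 2 + p ^ 2) ≤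
      Real.sqrt (‖u + d‖ ^ 2 + p ^ 2) := by
  set G := Real.sqrt (‖u‖ ^ 2 + p ^ 2) with hG
  have hG2 : G ^ 2 = ‖u‖ ^ 2 + p ^ 2 := Real.sq_sqrt (by positivity)
  have hGnn : 0 ≤ G := Real.sqrt_nonneg _
  have hGp : p ≤ G := by nlinarith [sq_nonneg ‖u‖]
  have hGpos : 0 < G := lt_of_lt_of_le hp hGp
  have hGu : ‖u‖ ≤ G := by nlinarith [sq_nonneg p, norm_nonneg u]
  set a := ⟪u, d⟫ with ha
  have hcs : a ^ 2 ≤ ‖u‖ ^ 2 * ‖d‖ ^ 2 := by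
    have := real_inner_mul_inner_self_le u d
    rw [real_inner_self_eq_norm_sq, real_inner_self_eq_norm_sq] at this
    nlinarith
  rcases le_or_gt (G + a / G) 0 with hB | hB
  · exact le_trans hB (Real.sqrt_nonneg _)
  · have hL : ‖u + d‖ ^ 2 + p ^ 2 = G ^ 2 + 2 * a + ‖d‖ ^ 2 := by
      rw [hG2, ha, norm_add_sq_real]; ring
    have hsq : (G + a / G) ^ 2 ≤ ‖u + d‖ ^ 2 + p ^ 2 := by
      rw [hL]
      have hkey : (G ^ 2 + 2 * a + ‖d‖ ^ 2) - (G + a / G) ^ 2 =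
          ‖d‖ ^ 2 - a ^ 2 / G ^ 2 := by field_simp; ring
      have h2 : a ^ 2 / G ^ 2 ≤ ‖d‖ ^ 2 := by
        rw [div_le_iff₀ (by positivity)]
        nlinarith
      linarith
    calc G + a / G = Real.sqrt ((G + a / G) ^ 2) := (Real.sqrt_sq hB.le).symm
      _ ≤ _ := Real.sqrt_le_sqrt hsq

noncomputable def Gv {n m : ℕ} (c : Fin m → EuclideanSpace ℝ (Fin n)) (p : ℝ)
    (x : EuclideanSpace ℝ (Fin n)) : EuclideanSpace ℝ (Fin n) :=
  ∑ i, ((Real.exp (Real.sqrt (‖x - c i‖ ^ 2 + p ^ 2) / p) /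
      (∑ j, Real.exp (Real.sqrt (‖x - c j‖ ^ 2 + p ^ 2) / p))) *
      (Real.sqrt (‖x - c i‖ ^ 2 + p ^ 2))⁻¹) • (x - c i)

set_option maxHeartbeats 1000000 in
lemma hasGrad {n m : ℕ} (hm : 1 ≤ m) (c : Fin m → EuclideanSpace ℝ (Fin n))
    {p : ℝ} (hp : 0 < p) (x : EuclideanSpace ℝ (Fin n)) :
    HasGradientAt (fun z => Dpt c z p) (Gv c p x) x := by
  have hmne : Nonempty (Fin m) := Fin.pos_iff_nonempty.mp hm
  set g : Fin m → ℝ := fun i => Real.sqrt (‖x - c i‖ ^ 2 + p ^ 2) with hg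
  have hargpos : ∀ i, 0 < ‖x - c i‖ ^ 2 + p ^ 2 := fun i => by positivity
  have hgpos : ∀ i, 0 < g i := fun i => Real.sqrt_pos.mpr (hargpos i)
  set S : ℝ := ∑ j, Real.exp (g j / p) with hS
  have hSpos : 0 < S :=
    Finset.sum_pos (fun j _ => Real.exp_pos _) Finset.univ_nonempty
  -- per-index derivative of z ↦ exp (√(‖z - c i‖² + p²) / p)
  have hed : ∀ i, HasFDerivAt (fun z : EuclideanSpace ℝ (Fin n) => Real.exp (Real.sqrt (‖z - c i‖ ^ 2 + p ^ 2) / p))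
      ((Real.exp (g i / p) * (1 / p)) • ((1 / (2 * g i)) •
        ((fderivInnerCLM ℝ (x - c i, x - c i)).comp
          ((ContinuousLinearMap.id ℝ (EuclideanSpace ℝ (Fin n))).prod (ContinuousLinearMap.id ℝ (EuclideanSpace ℝ (Fin n))))))) x := by
    intro i
    have hsub : HasFDerivAt (fun z : EuclideanSpace ℝ (Fin n) => z - c i) (ContinuousLinearMap.id ℝ (EuclideanSpace ℝ (Fin n))) x :=
      (hasFDerivAt_id x).sub_const (c i)
    have hinner : HasFDerivAt (fun z : EuclideanSpace ℝ (Fin n) => ⟪z - c i, z - c i⟫)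
        ((fderivInnerCLM ℝ (x - c i, x - c i)).comp
          ((ContinuousLinearMap.id ℝ (EuclideanSpace ℝ (Fin n))).prod (ContinuousLinearMap.id ℝ (EuclideanSpace ℝ (Fin n))))) x :=
      hsub.inner ℝ hsub
    have hq : HasFDerivAt (fun z : EuclideanSpace ℝ (Fin n) => ‖z - c i‖ ^ 2 + p ^ 2)
        ((fderivInnerCLM ℝ (x - c i, x - c i)).comp
          ((ContinuousLinearMap.id ℝ (EuclideanSpace ℝ (Fin n))).prod (ContinuousLinearMap.id ℝ (EuclideanSpace ℝ (Fin n))))) x := by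
      have := hinner.add_const (p ^ 2)
      have heq : (fun z : EuclideanSpace ℝ (Fin n) => ⟪z - c i, z - c i⟫ + p ^ 2) =
          fun z : EuclideanSpace ℝ (Fin n) => ‖z - c i‖ ^ 2 + p ^ 2 := by
        funext z; rw [real_inner_self_eq_norm_sq]
      rwa [heq] at this
    have hsqrt : HasDerivAt Real.sqrt (1 / (2 * g i)) (‖x - c i‖ ^ 2 + p ^ 2) := by
      have := Real.hasDerivAt_sqrt (hargpos i).ne'
      simpa [hg] using this
    have hgd : HasFDerivAt (fun z : EuclideanSpace ℝ (Fin n) => Real.sqrt (‖z - c i‖ ^ 2 + p ^ 2))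
        ((1 / (2 * g i)) • ((fderivInnerCLM ℝ (x - c i, x - c i)).comp
          ((ContinuousLinearMap.id ℝ (EuclideanSpace ℝ (Fin n))).prod (ContinuousLinearMap.id ℝ (EuclideanSpace ℝ (Fin n)))))) x :=
      hsqrt.comp_hasFDerivAt x hq
    have hexp : HasDerivAt (fun u : ℝ => Real.exp (u / p))
        (Real.exp (g i / p) * (1 / p)) (g i) := by
      have h1 : HasDerivAt (fun u : ℝ => u / p) (1 / p) (g i) := by
        simpa using (hasDerivAt_id (g i)).div_const p
      simpa [Function.comp_def] using (Real.hasDerivAt_exp (g i / p)).comp (g i) h1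
    exact hexp.comp_hasFDerivAt x hgd
  have hSd : HasFDerivAt (fun z : EuclideanSpace ℝ (Fin n) => ∑ i, Real.exp (Real.sqrt (‖z - c i‖ ^ 2 + p ^ 2) / p))
      (∑ i, (Real.exp (g i / p) * (1 / p)) • ((1 / (2 * g i)) •
        ((fderivInnerCLM ℝ (x - c i, x - c i)).comp
          ((ContinuousLinearMap.id ℝ (EuclideanSpace ℝ (Fin n))).prod (ContinuousLinearMap.id ℝ (EuclideanSpace ℝ (Fin n))))))) x :=
    HasFDerivAt.fun_sum (fun i _ => hed i)
  have hlog : HasDerivAt (fun u : ℝ => p * Real.log u) (p * S⁻¹) S :=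
    (Real.hasDerivAt_log hSpos.ne').const_mul p
  have hfinal : HasFDerivAt (fun z => Dpt c z p)
      ((p * S⁻¹) • ∑ i, (Real.exp (g i / p) * (1 / p)) • ((1 / (2 * g i)) •
        ((fderivInnerCLM ℝ (x - c i, x - c i)).comp
          ((ContinuousLinearMap.id ℝ (EuclideanSpace ℝ (Fin n))).prod (ContinuousLinearMap.id ℝ (EuclideanSpace ℝ (Fin n))))))) x := by
    have := hlog.comp_hasFDerivAt x hSd
    exact this
  rw [hasGradientAt_iff_hasFDerivAt]
  apply hfinal.congr_fderiv
  symm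
  ext z
  rw [InnerProductSpace.toDual_apply_apply]
  simp only [Gv, ContinuousLinearMap.smul_apply, ContinuousLinearMap.coe_sum',
    Finset.sum_apply, ContinuousLinearMap.coe_comp', Function.comp_apply,
    ContinuousLinearMap.prod_apply, ContinuousLinearMap.coe_id', id_eq,
    fderivInnerCLM_apply, smul_eq_mul]
  rw [sum_inner, Finset.mul_sum]
  apply Finset.sum_congr rfl
  intro i _
  rw [real_inner_smul_left, real_inner_comm z (x - c i)]
  have h1 := (hgpos i).ne'
  have h2 := hSpos.ne'
  field_simp
  ring

set_option maxHeartbeats 1000000 in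
lemma key_bounds {n m : ℕ} (hm : 1 ≤ m) (c : Fin m → EuclideanSpace ℝ (Fin n))
    {p : ℝ} (hp : 0 < p) (x y : EuclideanSpace ℝ (Fin n)) :
    (Dpt c y p + ⟪Gv c p y, x - y⟫ ≤ Dpt c x p) ∧
    (Dpt c x p ≤ Dpt c y p + ⟪Gv c p y, x - y⟫ + (1 / p) * ‖x - y‖ ^ 2) := by
  have hmne : Nonempty (Fin m) := Fin.pos_iff_nonempty.mp hm
  set d : EuclideanSpace ℝ (Fin n) := x - y with hd
  set g : Fin m → ℝ := fun i => Real.sqrt (‖y - c i‖ ^ 2 + p ^ 2) with hg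
  have hargpos : ∀ i, 0 < ‖y - c i‖ ^ 2 + p ^ 2 := fun i => by positivity
  have hgpos : ∀ i, 0 < g i := fun i => Real.sqrt_pos.mpr (hargpos i)
  have hgp : ∀ i, p ≤ g i := by
    intro i
    have h2 : g i ^ 2 = ‖y - c i‖ ^ 2 + p ^ 2 := Real.sq_sqrt (hargpos i).le
    nlinarith [(hgpos i).le, sq_nonneg ‖y - c i‖]
  have hgu : ∀ i, ‖y - c i‖ ≤ g i := by
    intro i
    have h2 : g i ^ 2 = ‖y - c i‖ ^ 2 + p ^ 2 := Real.sq_sqrt (hargpos i).le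
    nlinarith [(hgpos i).le, norm_nonneg (y - c i), sq_nonneg p]
  set S : ℝ := ∑ j, Real.exp (g j / p) with hS
  have hSpos : 0 < S := Finset.sum_pos (fun j _ => Real.exp_pos _) Finset.univ_nonempty
  set lam : Fin m → ℝ := fun i => Real.exp (g i / p) / S with hlam
  have hlampos : ∀ i, 0 < lam i := fun i => div_pos (Real.exp_pos _) hSpos
  have hlamsum : ∑ i, lam i = 1 := by
    rw [hlam, ← Finset.sum_div, ← hS, div_self hSpos.ne']
  set s : Fin m → ℝ := fun i => ⟪y - c i, d⟫ / g i with hs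
  have hyd : ∀ i, y - c i + d = x - c i := fun i => by rw [hd]; abel
  have hsabs : ∀ i, |s i| ≤ ‖d‖ := by
    intro i
    rw [hs]
    rw [abs_div, abs_of_pos (hgpos i), div_le_iff₀ (hgpos i)]
    calc |⟪y - c i, d⟫| ≤ ‖y - c i‖ * ‖d‖ := abs_real_inner_le_norm _ _
      _ ≤ g i * ‖d‖ := by
          apply mul_le_mul_of_nonneg_right (hgu i) (norm_nonneg d)
      _ = ‖d‖ * g i := by ring
  set Q : ℝ := ∑ i, lam i * Real.exp (s i / p) with hQ
  have hQpos : 0 < Q :=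
    Finset.sum_pos (fun i _ => mul_pos (hlampos i) (Real.exp_pos _)) Finset.univ_nonempty
  have hinner : ⟪Gv c p y, d⟫ = ∑ i, lam i * s i := by
    rw [Gv, sum_inner]
    apply Finset.sum_congr rfl
    intro i _
    rw [real_inner_smul_left]
    have : Real.sqrt (‖y - c i‖ ^ 2 + p ^ 2) = g i := rfl
    rw [this, hs, hlam]
    simp only [hS, hg]
    field_simp
  have hDy : Dpt c y p = p * Real.log S := rfl
  -- key identity: p * log (∑ exp ((g i + s i) / p)) = Dpt y + p * log Q
  have hident : (∑ i, Real.exp ((g i + s i) / p)) = S * Q := by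
    rw [hQ, Finset.mul_sum]
    apply Finset.sum_congr rfl
    intro i _
    rw [show (g i + s i) / p = g i / p + s i / p by ring, Real.exp_add, hlam]
    rw [div_mul_eq_mul_div, mul_comm S, div_mul_cancel₀ _ hSpos.ne']
  have hlamsi : p * (∑ i, lam i * (s i / p)) = ∑ i, lam i * s i := by
    rw [Finset.mul_sum]
    exact Finset.sum_congr rfl fun i _ => by field_simp
  constructor
  · -- lower bound (first-order convexity)
    have step1 : ∀ i ∈ (univ : Finset (Fin m)), Real.exp ((g i + s i) / p) ≤
        Real.exp (Real.sqrt (‖x - c i‖ ^ 2 + p ^ 2) / p) := by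
      intro i _
      apply Real.exp_le_exp.mpr
      have hgl := g_lower (y - c i) d hp
      rw [hyd i] at hgl
      have hgs : g i + s i ≤ Real.sqrt (‖x - c i‖ ^ 2 + p ^ 2) := by
        simp only [hg, hs]
        simpa using hgl
      gcongr
    have hmono : p * Real.log (∑ i, Real.exp ((g i + s i) / p)) ≤ Dpt c x p := by
      rw [show Dpt c x p =
        p * Real.log (∑ i, Real.exp (Real.sqrt (‖x - c i‖ ^ 2 + p ^ 2) / p)) from rfl]
      apply mul_le_mul_of_nonneg_left _ hp.le
      apply Real.log_le_log
        (Finset.sum_pos (fun i _ => Real.exp_pos _) Finset.univ_nonempty)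
        (Finset.sum_le_sum step1)
    have heq : p * Real.log (∑ i, Real.exp ((g i + s i) / p)) =
        Dpt c y p + p * Real.log Q := by
      rw [hident, Real.log_mul hSpos.ne' hQpos.ne', hDy]; ring
    have hjen : (∑ i, lam i * (s i / p)) ≤ Real.log Q :=
      jensen_exp lam (fun i => s i / p) hlampos hlamsum
    have h5 : Dpt c y p + ⟪Gv c p y, d⟫ ≤ Dpt c y p + p * Real.log Q := by
      rw [hinner, ← hlamsi]
      nlinarith [mul_le_mul_of_nonneg_left hjen hp.le]
    linarith
  · -- descent inequality
    have step1 : ∀ i ∈ (univ : Finset (Fin m)),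
        Real.exp (Real.sqrt (‖x - c i‖ ^ 2 + p ^ 2) / p) ≤
        Real.exp ((g i + s i + ‖d‖ ^ 2 / (2 * p)) / p) := by
      intro i _
      apply Real.exp_le_exp.mpr
      have hgu2 := g_upper (y - c i) d hp
      rw [hyd i] at hgu2
      have hgs : Real.sqrt (‖x - c i‖ ^ 2 + p ^ 2) ≤ g i + s i + ‖d‖ ^ 2 / (2 * p) := by
        simp only [hg, hs]
        simpa using hgu2
      gcongr
    have hmono : Dpt c x p ≤
        p * Real.log (∑ i, Real.exp ((g i + s i + ‖d‖ ^ 2 / (2 * p)) / p)) := by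
      rw [show Dpt c x p =
        p * Real.log (∑ i, Real.exp (Real.sqrt (‖x - c i‖ ^ 2 + p ^ 2) / p)) from rfl]
      apply mul_le_mul_of_nonneg_left _ hp.le
      apply Real.log_le_log
        (Finset.sum_pos (fun i _ => Real.exp_pos _) Finset.univ_nonempty)
        (Finset.sum_le_sum step1)
    have hident2 : (∑ i, Real.exp ((g i + s i + ‖d‖ ^ 2 / (2 * p)) / p)) =
        Real.exp (‖d‖ ^ 2 / (2 * p) / p) * (S * Q) := by
      rw [hQ, Finset.mul_sum, Finset.mul_sum]
      apply Finset.sum_congr rfl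
      intro i _
      rw [show (g i + s i + ‖d‖ ^ 2 / (2 * p)) / p
            = ‖d‖ ^ 2 / (2 * p) / p + (g i / p + s i / p) by ring,
        Real.exp_add, Real.exp_add, hlam]
      rw [div_mul_eq_mul_div, mul_comm S, div_mul_cancel₀ _ hSpos.ne']
    have heq : p * Real.log (∑ i, Real.exp ((g i + s i + ‖d‖ ^ 2 / (2 * p)) / p)) =
        ‖d‖ ^ 2 / (2 * p) + Dpt c y p + p * Real.log Q := by
      rw [hident2, Real.log_mul (Real.exp_pos _).ne' (mul_pos hSpos hQpos).ne',
        Real.log_mul hSpos.ne' hQpos.ne', Real.log_exp, hDy]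
      field_simp
      ring
    have hlse : Real.log Q ≤ (∑ i, lam i * (s i / p)) + (‖d‖ / p) ^ 2 / 2 := by
      apply lse1d lam (fun i => s i / p) hlampos hlamsum (‖d‖ / p)
      intro i
      rw [abs_div, abs_of_pos hp]
      exact div_le_div_of_nonneg_right (hsabs i) hp.le
    have hK : p * ((‖d‖ / p) ^ 2 / 2) = ‖d‖ ^ 2 / (2 * p) := by
      field_simp
    have h5 : p * Real.log Q ≤ ⟪Gv c p y, d⟫ + ‖d‖ ^ 2 / (2 * p) := by
      rw [hinner, ← hlamsi, ← hK]
      nlinarith [mul_le_mul_of_nonneg_left hlse hp.le]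
    have hKK : ‖d‖ ^ 2 / (2 * p) + ‖d‖ ^ 2 / (2 * p) = (1 / p) * ‖d‖ ^ 2 := by
      field_simp; ring
    linarith

set_option maxHeartbeats 1000000 in
/-- For points `c₁, …, c_m` (`m ≥ 1`) and `p > 0`, the function
`x ↦ D(x, p)` is differentiable on `ℝⁿ` and its gradient is globally Lipschitz
with constant `2/p`. -/
theorem stmt_8 {n m : ℕ} (hm : 1 ≤ m) (c : Fin m → EuclideanSpace ℝ (Fin n))
    (p : ℝ) (hp : 0 < p) :
    (∀ x : EuclideanSpace ℝ (Fin n), DifferentiableAt ℝ (fun z => Dpt c z p) x) ∧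
    (∀ x y : EuclideanSpace ℝ (Fin n),
      ‖gradient (fun z => Dpt c z p) x - gradient (fun z => Dpt c z p) y‖ ≤
        2 / p * ‖x - y‖) := by
  constructor
  · exact fun x => (hasGrad hm c hp x).differentiableAt
  · intro x y
    rw [(hasGrad hm c hp x).gradient, (hasGrad hm c hp y).gradient]
    set u : EuclideanSpace ℝ (Fin n) := Gv c p x - Gv c p y with hu
    set z : EuclideanSpace ℝ (Fin n) := y + (p / 2) • u with hz
    obtain ⟨hA1, -⟩ := key_bounds hm c hp z x
    obtain ⟨-, hB1⟩ := key_bounds hm c hp z y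
    obtain ⟨-, hB2⟩ := key_bounds hm c hp y x
    have hzy : z - y = (p / 2) • u := by rw [hz]; abel
    have hzx : z - x = y - x + (p / 2) • u := by rw [hz]; abel
    have e1 : ⟪Gv c p y, z - y⟫ = p / 2 * ⟪Gv c p y, u⟫ := by
      rw [hzy, real_inner_smul_right]
    have e2 : ⟪Gv c p x, z - x⟫ = ⟪Gv c p x, y - x⟫ + p / 2 * ⟪Gv c p x, u⟫ := by
      rw [hzx, inner_add_right, real_inner_smul_right]
    have e3 : ‖z - y‖ ^ 2 = (p / 2) ^ 2 * ‖u‖ ^ 2 := by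
      rw [hzy, norm_smul, Real.norm_eq_abs, abs_of_pos (by positivity : (0:ℝ) < p / 2)]
      ring
    have e4 : ⟪Gv c p x, u⟫ - ⟪Gv c p y, u⟫ = ‖u‖ ^ 2 := by
      rw [← inner_sub_left, ← hu, real_inner_self_eq_norm_sq]
    have hnorm : ‖y - x‖ = ‖x - y‖ := norm_sub_rev y x
    rw [e1, e3] at hB1
    rw [e2] at hA1
    rw [hnorm] at hB2
    have hfield : (1 / p) * ((p / 2) ^ 2 * ‖u‖ ^ 2) = p / 4 * ‖u‖ ^ 2 := by
      field_simp; ring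
    have hcomb : p / 4 * ‖u‖ ^ 2 ≤ (1 / p) * ‖x - y‖ ^ 2 := by nlinarith [hA1, hB1, hB2]
    have h2 : ‖u‖ ^ 2 ≤ (2 / p * ‖x - y‖) ^ 2 := by
      have h3 := mul_le_mul_of_nonneg_left hcomb (le_of_lt (by positivity : (0:ℝ) < 4 / p))
      have h4 : (4 / p) * (p / 4 * ‖u‖ ^ 2) = ‖u‖ ^ 2 := by field_simp
      have h5 : (4 / p) * ((1 / p) * ‖x - y‖ ^ 2) = (2 / p * ‖x - y‖) ^ 2 := by
        field_simp; ring
      rw [h4, h5] at h3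
      exact h3
    have hrhs : (0:ℝ) ≤ 2 / p * ‖x - y‖ := by positivity
    nlinarith [norm_nonneg u, h2, hrhs]
end

section
/- Let Ω ⊆ ℝⁿ be a nonempty closed convex set and assume at least one of the sets Ω, Ω₁, …, Ω_m is bounded. Fix p̄ > 0 and x₀ ∈ Ω, and let {x_k}_{k≥0} ⊆ Ω be a sequence such that for every k ≥ 0, x_{k+1} minimizes x ↦ G(x, x_k, p̄) over Ω. Then the sequence {D(x_k, p̄)} is nonincreasing, the sequence {x_k} is bounded, and {x_k} has a convergent subsequence. -/
/-- The majorization `G(x, y, p) = p ln Σᵢ exp(√(‖x − Π(y; Ωᵢ)‖² + p²) / p)`, where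
`proj i` is the metric projection onto `Ωᵢ`. -/
noncomputable def Gmaj {n m : ℕ}
    (proj : Fin m → EuclideanSpace ℝ (Fin n) → EuclideanSpace ℝ (Fin n))
    (x y : EuclideanSpace ℝ (Fin n)) (p : ℝ) : ℝ :=
  p * Real.log (∑ i, Real.exp (Real.sqrt (‖x - proj i y‖ ^ 2 + p ^ 2) / p))

private lemma sum_exp_pos' {m : ℕ} (hm : 0 < m) (t : Fin m → ℝ) :
    0 < ∑ i, Real.exp (t i) := by
  haveI : Nonempty (Fin m) := Fin.pos_iff_nonempty.mp hm
  exact Finset.sum_pos (fun i _ => Real.exp_pos _) Finset.univ_nonempty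

private lemma logexp_mono {m : ℕ} (hm : 0 < m) (p : ℝ) (hp : 0 < p)
    (a b : Fin m → ℝ) (ha : ∀ i, 0 ≤ a i) (hab : ∀ i, a i ≤ b i) :
    p * Real.log (∑ i, Real.exp (Real.sqrt (a i ^ 2 + p ^ 2) / p)) ≤
    p * Real.log (∑ i, Real.exp (Real.sqrt (b i ^ 2 + p ^ 2) / p)) := by
  apply mul_le_mul_of_nonneg_left _ hp.le
  apply Real.log_le_log (sum_exp_pos' hm _)
  apply Finset.sum_le_sum
  intro i _
  apply Real.exp_le_exp.mpr
  gcongr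
  · exact ha i
  · exact hab i

/-- For a nonempty closed convex constraint set `Ω`, with at least one of
`Ω, Ω₁, …, Ω_m` bounded, any MM sequence `{xₖ} ⊆ Ω` (each `x_{k+1}` minimizing
`G(·, xₖ, p̄)` over `Ω`) makes `{D(xₖ, p̄)}` nonincreasing, is bounded, and has a
convergent subsequence. -/
theorem stmt_9 {n m : ℕ} (hm : 1 < m) (Om : Set (EuclideanSpace ℝ (Fin n)))
    (hOm : Om.Nonempty) (hOmcl : IsClosed Om) (hOmconv : Convex ℝ Om)
    (Ω : Fin m → Set (EuclideanSpace ℝ (Fin n)))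
    (hne : ∀ i, (Ω i).Nonempty) (hcl : ∀ i, IsClosed (Ω i)) (hconv : ∀ i, Convex ℝ (Ω i))
    (hbdd : Bornology.IsBounded Om ∨ ∃ i, Bornology.IsBounded (Ω i))
    (proj : Fin m → EuclideanSpace ℝ (Fin n) → EuclideanSpace ℝ (Fin n))
    (hproj : ∀ i y, proj i y ∈ Ω i ∧ ‖y - proj i y‖ = Metric.infDist y (Ω i))
    (pbar : ℝ) (hpbar : 0 < pbar)
    (x : ℕ → EuclideanSpace ℝ (Fin n)) (hx : ∀ k, x k ∈ Om)
    (hmin : ∀ k, ∀ z ∈ Om, Gmaj proj (x (k + 1)) (x k) pbar ≤ Gmaj proj z (x k) pbar) :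
    (∀ k, Dsmooth Ω (x (k + 1)) pbar ≤ Dsmooth Ω (x k) pbar) ∧
    Bornology.IsBounded (Set.range x) ∧
    (∃ xbar : EuclideanSpace ℝ (Fin n), ∃ φ : ℕ → ℕ, StrictMono φ ∧
      Filter.Tendsto (x ∘ φ) Filter.atTop (nhds xbar)) := by
  have hm0 : 0 < m := by omega
  -- D ≤ G(·, y)
  have hDG : ∀ (z y : EuclideanSpace ℝ (Fin n)),
      Dsmooth Ω z pbar ≤ Gmaj proj z y pbar := by
    intro z y
    apply logexp_mono hm0 pbar hpbar
    · intro i; exact Metric.infDist_nonneg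
    · intro i
      have := Metric.infDist_le_dist_of_mem (x := z) (hproj i y).1
      rwa [dist_eq_norm] at this
  -- G(y, y) = D(y)
  have hGD : ∀ y : EuclideanSpace ℝ (Fin n), Gmaj proj y y pbar = Dsmooth Ω y pbar := by
    intro y
    unfold Gmaj Dsmooth
    congr 2
    apply Finset.sum_congr rfl
    intro i _
    rw [(hproj i y).2]
  -- monotonicity
  have hmono : ∀ k, Dsmooth Ω (x (k + 1)) pbar ≤ Dsmooth Ω (x k) pbar := by
    intro k
    calc Dsmooth Ω (x (k + 1)) pbar ≤ Gmaj proj (x (k + 1)) (x k) pbar := hDG _ _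
      _ ≤ Gmaj proj (x k) (x k) pbar := hmin k (x k) (hx k)
      _ = Dsmooth Ω (x k) pbar := hGD _
  have hanti : ∀ k, Dsmooth Ω (x k) pbar ≤ Dsmooth Ω (x 0) pbar := by
    intro k
    induction k with
    | zero => exact le_refl _
    | succ k ih => exact le_trans (hmono k) ih
  -- lower bound: infDist ≤ D
  have hDge : ∀ (z : EuclideanSpace ℝ (Fin n)) (i : Fin m),
      Metric.infDist z (Ω i) ≤ Dsmooth Ω z pbar := by
    intro z i
    set t : Fin m → ℝ := fun j => Real.sqrt (Metric.infDist z (Ω j) ^ 2 + pbar ^ 2) / pbar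
    have h1 : t i ≤ Real.log (∑ j, Real.exp (t j)) := by
      rw [Real.le_log_iff_exp_le (sum_exp_pos' hm0 _)]
      exact Finset.single_le_sum (fun j _ => (Real.exp_pos _).le) (Finset.mem_univ i)
    have h2 : Metric.infDist z (Ω i) ≤ Real.sqrt (Metric.infDist z (Ω i) ^ 2 + pbar ^ 2) := by
      calc Metric.infDist z (Ω i) = Real.sqrt (Metric.infDist z (Ω i) ^ 2) := by
            rw [Real.sqrt_sq Metric.infDist_nonneg]
        _ ≤ _ := Real.sqrt_le_sqrt (le_add_of_nonneg_right (sq_nonneg _))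
    calc Metric.infDist z (Ω i) ≤ Real.sqrt (Metric.infDist z (Ω i) ^ 2 + pbar ^ 2) := h2
      _ = pbar * t i := by simp only [t]; field_simp [hpbar.ne']
      _ ≤ pbar * Real.log (∑ j, Real.exp (t j)) :=
          mul_le_mul_of_nonneg_left h1 hpbar.le
      _ = Dsmooth Ω z pbar := rfl
  -- boundedness
  have hbound : Bornology.IsBounded (Set.range x) := by
    rcases hbdd with hb | ⟨i, hb⟩
    · exact hb.subset (Set.range_subset_iff.mpr hx)
    · obtain ⟨R, hR⟩ := hb.subset_closedBall 0
      apply (Metric.isBounded_closedBall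
        (x := (0 : EuclideanSpace ℝ (Fin n)))
        (r := Dsmooth Ω (x 0) pbar + R)).subset
      rintro _ ⟨k, rfl⟩
      have h1 : Metric.infDist (x k) (Ω i) ≤ Dsmooth Ω (x 0) pbar :=
        le_trans (hDge (x k) i) (hanti k)
      have h2 : ‖proj i (x k)‖ ≤ R := by
        have := hR (hproj i (x k)).1
        simpa [Metric.mem_closedBall, dist_eq_norm] using this
      have h3 : ‖x k - proj i (x k)‖ = Metric.infDist (x k) (Ω i) := (hproj i (x k)).2
      simp only [Metric.mem_closedBall, dist_eq_norm, sub_zero]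
      calc ‖x k‖ = ‖(x k - proj i (x k)) + proj i (x k)‖ := by rw [sub_add_cancel]
        _ ≤ ‖x k - proj i (x k)‖ + ‖proj i (x k)‖ := norm_add_le _ _
        _ ≤ Dsmooth Ω (x 0) pbar + R := by rw [h3]; exact add_le_add h1 h2
  refine ⟨hmono, hbound, ?_⟩
  obtain ⟨a, _, φ, hφ, hconv'⟩ := tendsto_subseq_of_bounded hbound (fun k => Set.mem_range_self k)
  exact ⟨a, φ, hφ, hconv'⟩
end

section
/- Let Ω ⊆ ℝⁿ be a nonempty closed convex set and fix p̄ > 0. A point x̄ ∈ Ω satisfies G(x̄, x̄, p̄) = min_{y∈Ω} G(y, x̄, p̄) (i.e., x̄ is a fixed point of the MM algorithm map) if and only if x̄ minimizes the function x ↦ D(x, p̄) over Ω. -/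
section Helpers

open Real

/-- Monotonicity of the log-sum-exp expression. -/
lemma lse_mono {m : ℕ} (hm : 0 < m) {p : ℝ} (hp : 0 < p) {γ δ : Fin m → ℝ}
    (h : ∀ i, γ i ≤ δ i) :
    p * Real.log (∑ i, Real.exp (γ i / p)) ≤ p * Real.log (∑ i, Real.exp (δ i / p)) := by
  haveI : Nonempty (Fin m) := ⟨⟨0, hm⟩⟩
  refine mul_le_mul_of_nonneg_left ?_ hp.le
  refine Real.log_le_log (Finset.sum_pos (fun i _ => Real.exp_pos _) Finset.univ_nonempty) ?_
  refine Finset.sum_le_sum fun i _ => ?_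
  exact Real.exp_le_exp.2 ((div_le_div_iff_of_pos_right hp).mpr (h i))

/-- Convexity-type inequality for log-sum-exp (with an additive constant). -/
lemma lse_convex {m : ℕ} (hm : 0 < m) {p : ℝ} (hp : 0 < p) {t : ℝ} (ht0 : 0 ≤ t) (ht1 : t ≤ 1)
    (K : ℝ) (α β : Fin m → ℝ) :
    p * Real.log (∑ i, Real.exp (((1 - t) * α i + t * β i + K) / p)) ≤
      (1 - t) * (p * Real.log (∑ i, Real.exp (α i / p))) +
        t * (p * Real.log (∑ i, Real.exp (β i / p))) + K := by
  haveI : Nonempty (Fin m) := ⟨⟨0, hm⟩⟩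
  have hApos : (0:ℝ) < ∑ i, Real.exp (α i / p) :=
    Finset.sum_pos (fun i _ => Real.exp_pos _) Finset.univ_nonempty
  have hBpos : (0:ℝ) < ∑ i, Real.exp (β i / p) :=
    Finset.sum_pos (fun i _ => Real.exp_pos _) Finset.univ_nonempty
  set A := ∑ i, Real.exp (α i / p) with hA
  set B := ∑ i, Real.exp (β i / p) with hB
  have hec : ∀ u c : ℝ, (Real.exp u) ^ c = Real.exp (c * u) := fun u c => by
    rw [Real.rpow_def_of_pos (Real.exp_pos u), Real.log_exp, mul_comm]
  have hterm : ∀ i : Fin m, Real.exp (((1 - t) * α i + t * β i + K) / p) ≤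
      Real.exp (K / p) * (A ^ (1 - t) * B ^ t) *
        ((1 - t) * (Real.exp (α i / p) / A) + t * (Real.exp (β i / p) / B)) := by
    intro i
    have hgm := Real.geom_mean_le_arith_mean2_weighted (by linarith : (0:ℝ) ≤ 1 - t) ht0
      (le_of_lt (div_pos (Real.exp_pos (α i / p)) hApos))
      (le_of_lt (div_pos (Real.exp_pos (β i / p)) hBpos)) (by ring)
    have hApow := Real.rpow_pos_of_pos hApos (1 - t)
    have hBpow := Real.rpow_pos_of_pos hBpos t
    calc Real.exp (((1 - t) * α i + t * β i + K) / p)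
        = Real.exp (K / p) * (Real.exp (α i / p) ^ (1 - t) * Real.exp (β i / p) ^ t) := by
          rw [hec, hec, ← Real.exp_add, ← Real.exp_add]
          congr 1
          field_simp
          ring
      _ = Real.exp (K / p) * (A ^ (1 - t) * B ^ t) *
            ((Real.exp (α i / p) / A) ^ (1 - t) * (Real.exp (β i / p) / B) ^ t) := by
          rw [Real.div_rpow (Real.exp_pos _).le hApos.le,
            Real.div_rpow (Real.exp_pos _).le hBpos.le]
          field_simp
      _ ≤ _ := by
          exact mul_le_mul_of_nonneg_left hgm
            (by positivity)
  have hsum : (∑ i, Real.exp (((1 - t) * α i + t * β i + K) / p)) ≤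
      Real.exp (K / p) * (A ^ (1 - t) * B ^ t) := by
    calc (∑ i, Real.exp (((1 - t) * α i + t * β i + K) / p))
        ≤ ∑ i, Real.exp (K / p) * (A ^ (1 - t) * B ^ t) *
            ((1 - t) * (Real.exp (α i / p) / A) + t * (Real.exp (β i / p) / B)) :=
          Finset.sum_le_sum fun i _ => hterm i
      _ = Real.exp (K / p) * (A ^ (1 - t) * B ^ t) *
            ∑ i, ((1 - t) * (Real.exp (α i / p) / A) + t * (Real.exp (β i / p) / B)) := by
          rw [← Finset.mul_sum]
      _ = Real.exp (K / p) * (A ^ (1 - t) * B ^ t) := by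
          have hone : (∑ i, ((1 - t) * (Real.exp (α i / p) / A) +
              t * (Real.exp (β i / p) / B))) = 1 := by
            rw [Finset.sum_add_distrib, ← Finset.mul_sum, ← Finset.mul_sum,
              ← Finset.sum_div, ← Finset.sum_div, ← hA, ← hB,
              div_self hApos.ne', div_self hBpos.ne']
            ring
          rw [hone, mul_one]
  have hLpos : (0:ℝ) < ∑ i, Real.exp (((1 - t) * α i + t * β i + K) / p) :=
    Finset.sum_pos (fun i _ => Real.exp_pos _) Finset.univ_nonempty
  have hApow := Real.rpow_pos_of_pos hApos (1 - t)
  have hBpow := Real.rpow_pos_of_pos hBpos t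
  have hlog : Real.log (∑ i, Real.exp (((1 - t) * α i + t * β i + K) / p)) ≤
      K / p + ((1 - t) * Real.log A + t * Real.log B) := by
    calc Real.log (∑ i, Real.exp (((1 - t) * α i + t * β i + K) / p))
        ≤ Real.log (Real.exp (K / p) * (A ^ (1 - t) * B ^ t)) := Real.log_le_log hLpos hsum
      _ = K / p + ((1 - t) * Real.log A + t * Real.log B) := by
          rw [Real.log_mul (Real.exp_pos _).ne' (mul_pos hApow hBpow).ne', Real.log_exp,
            Real.log_mul hApow.ne' hBpow.ne', Real.log_rpow hApos, Real.log_rpow hBpos]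
  calc p * Real.log (∑ i, Real.exp (((1 - t) * α i + t * β i + K) / p))
      ≤ p * (K / p + ((1 - t) * Real.log A + t * Real.log B)) :=
        mul_le_mul_of_nonneg_left hlog hp.le
    _ = (1 - t) * (p * Real.log A) + t * (p * Real.log B) + K := by
        field_simp
        ring

/-- Variational inequality for a minimizer of distance to a convex set. -/
lemma proj_inner {E : Type*} [NormedAddCommGroup E] [InnerProductSpace ℝ E]
    {S : Set E} (hS : Convex ℝ S) {u a : E} (ha : a ∈ S)
    (hmin : ∀ w ∈ S, ‖u - a‖ ≤ ‖u - w‖) : ∀ z ∈ S, (inner ℝ (u - a) (z - a) : ℝ) ≤ 0 := by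
  haveI : Nonempty S := ⟨⟨a, ha⟩⟩
  have heq : ‖u - a‖ = ⨅ w : S, ‖u - w‖ :=
    le_antisymm (le_ciInf fun w => hmin w w.2)
      (ciInf_le (f := fun w : S => ‖u - (w : E)‖) ⟨0, fun x hx => by obtain ⟨w, rfl⟩ := hx; positivity⟩ ⟨a, ha⟩)
  exact (norm_eq_iInf_iff_real_inner_le_zero hS ha).mp heq

/-- Nonexpansiveness-type bound from two variational inequalities. -/
lemma proj_dist_le {E : Type*} [NormedAddCommGroup E] [InnerProductSpace ℝ E]
    {S : Set E} {u v a b : E}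
    (ha : ∀ z ∈ S, (inner ℝ (u - a) (z - a) : ℝ) ≤ 0)
    (hb : ∀ z ∈ S, (inner ℝ (v - b) (z - b) : ℝ) ≤ 0)
    (haS : a ∈ S) (hbS : b ∈ S) : ‖b - a‖ ≤ ‖v - u‖ := by
  have h1 := ha b hbS
  have h2 := hb a haS
  have h2' : (inner ℝ (b - v) (b - a) : ℝ) ≤ 0 := by
    have e1 : b - v = -(v - b) := by abel
    have e2 : b - a = -(a - b) := by abel
    rw [e1, e2, inner_neg_neg]
    exact h2
  have hdec : (inner ℝ (b - a) (b - a) : ℝ) =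
      inner ℝ (b - v) (b - a) + inner ℝ (v - u) (b - a) + inner ℝ (u - a) (b - a) := by
    rw [← inner_add_left, ← inner_add_left]
    congr 1
    abel
  have hcs : (inner ℝ (v - u) (b - a) : ℝ) ≤ ‖v - u‖ * ‖b - a‖ := real_inner_le_norm _ _
  have hself : (inner ℝ (b - a) (b - a) : ℝ) = ‖b - a‖ ^ 2 := real_inner_self_eq_norm_sq _
  have hsq : ‖b - a‖ ^ 2 ≤ ‖v - u‖ * ‖b - a‖ := by linarith
  rcases eq_or_lt_of_le (norm_nonneg (b - a)) with h | h
  · rw [← h]; exact norm_nonneg _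
  · nlinarith

/-- Quadratic expansion bound. -/
lemma proj_quad {E : Type*} [NormedAddCommGroup E] [InnerProductSpace ℝ E]
    {u v a b : E} (h1 : (inner ℝ (u - a) (b - a) : ℝ) ≤ 0) :
    ‖v - a‖ ^ 2 ≤ ‖v - b‖ ^ 2 + 2 * (‖v - u‖ * ‖b - a‖) := by
  have hexp : ‖v - a‖ ^ 2 = ‖v - b‖ ^ 2 + 2 * (inner ℝ (v - b) (b - a) : ℝ) + ‖b - a‖ ^ 2 := by
    have e : v - a = (v - b) + (b - a) := by abel
    rw [e, norm_add_sq_real]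
  have hdec : (inner ℝ (v - b) (b - a) : ℝ) =
      inner ℝ (v - u) (b - a) + inner ℝ (u - a) (b - a) + inner ℝ (a - b) (b - a) := by
    rw [← inner_add_left, ← inner_add_left]
    congr 1
    abel
  have hab : (inner ℝ (a - b) (b - a) : ℝ) = -‖b - a‖ ^ 2 := by
    have e : a - b = -(b - a) := by abel
    rw [e, inner_neg_left, real_inner_self_eq_norm_sq]
  have hcs : (inner ℝ (v - u) (b - a) : ℝ) ≤ ‖v - u‖ * ‖b - a‖ := real_inner_le_norm _ _
  nlinarith [sq_nonneg ‖b - a‖]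

/-- √(q²+p²) ≤ √(d²+p²) + ε/(2p) whenever q² ≤ d² + ε. -/
lemma sqrt_sq_add_le {p q d ε : ℝ} (hp : 0 < p) (hε : 0 ≤ ε) (h : q ^ 2 ≤ d ^ 2 + ε) :
    Real.sqrt (q ^ 2 + p ^ 2) ≤ Real.sqrt (d ^ 2 + p ^ 2) + ε / (2 * p) := by
  have hs : Real.sqrt (d ^ 2 + p ^ 2) ^ 2 = d ^ 2 + p ^ 2 :=
    Real.sq_sqrt (by positivity)
  have hpd : p ≤ Real.sqrt (d ^ 2 + p ^ 2) := by
    nlinarith [hs, Real.sqrt_nonneg (d ^ 2 + p ^ 2), sq_nonneg d]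
  set c : ℝ := ε / (2 * p) with hc
  have hc0 : 0 ≤ c := by positivity
  have hcε : ε = 2 * p * c := by rw [hc]; field_simp
  have h2 : ε ≤ 2 * Real.sqrt (d ^ 2 + p ^ 2) * c := by
    nlinarith [mul_nonneg (sub_nonneg.mpr hpd) hc0]
  calc Real.sqrt (q ^ 2 + p ^ 2)
      ≤ Real.sqrt ((Real.sqrt (d ^ 2 + p ^ 2) + c) ^ 2) := by
        refine Real.sqrt_le_sqrt ?_
        nlinarith [hs, h2, sq_nonneg c]
    _ = Real.sqrt (d ^ 2 + p ^ 2) + c := by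
        refine Real.sqrt_sq ?_
        have := Real.sqrt_nonneg (d ^ 2 + p ^ 2)
        positivity

/-- Convexity of `d ↦ √(d²+p²)` along a segment. -/
lemma sqrt_combo {p t d0 d1 dt : ℝ} (hp : 0 < p) (ht0 : 0 ≤ t) (ht1 : t ≤ 1)
    (hd0 : 0 ≤ d0) (hd1 : 0 ≤ d1) (hdt : 0 ≤ dt) (hseg : dt ≤ (1 - t) * d0 + t * d1) :
    Real.sqrt (dt ^ 2 + p ^ 2) ≤
      (1 - t) * Real.sqrt (d0 ^ 2 + p ^ 2) + t * Real.sqrt (d1 ^ 2 + p ^ 2) := by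
  have hS0 : (0:ℝ) ≤ Real.sqrt (d0 ^ 2 + p ^ 2) := Real.sqrt_nonneg _
  have hS1 : (0:ℝ) ≤ Real.sqrt (d1 ^ 2 + p ^ 2) := Real.sqrt_nonneg _
  have hS0sq : Real.sqrt (d0 ^ 2 + p ^ 2) ^ 2 = d0 ^ 2 + p ^ 2 := Real.sq_sqrt (by positivity)
  have hS1sq : Real.sqrt (d1 ^ 2 + p ^ 2) ^ 2 = d1 ^ 2 + p ^ 2 := Real.sq_sqrt (by positivity)
  have key : d0 * d1 + p ^ 2 ≤ Real.sqrt (d0 ^ 2 + p ^ 2) * Real.sqrt (d1 ^ 2 + p ^ 2) := by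
    have h := Real.sqrt_le_sqrt
      (show (d0 * d1 + p ^ 2) ^ 2 ≤ (d0 ^ 2 + p ^ 2) * (d1 ^ 2 + p ^ 2) by
        nlinarith [sq_nonneg (d0 - d1), sq_nonneg p, mul_nonneg hd0 hd1])
    rwa [Real.sqrt_sq (by positivity), Real.sqrt_mul (by positivity)] at h
  have hnn : 0 ≤ (1 - t) * Real.sqrt (d0 ^ 2 + p ^ 2) + t * Real.sqrt (d1 ^ 2 + p ^ 2) :=
    add_nonneg (mul_nonneg (by linarith) hS0) (mul_nonneg ht0 hS1)
  calc Real.sqrt (dt ^ 2 + p ^ 2)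
      ≤ Real.sqrt (((1 - t) * Real.sqrt (d0 ^ 2 + p ^ 2) +
          t * Real.sqrt (d1 ^ 2 + p ^ 2)) ^ 2) := by
        refine Real.sqrt_le_sqrt ?_
        set S0 := Real.sqrt (d0 ^ 2 + p ^ 2) with hSS0
        set S1 := Real.sqrt (d1 ^ 2 + p ^ 2) with hSS1
        have e : ((1 - t) * S0 + t * S1) ^ 2
            = (1 - t) ^ 2 * S0 ^ 2 + t ^ 2 * S1 ^ 2 + 2 * (t * (1 - t)) * (S0 * S1) := by
          ring
        nlinarith [e, hS0sq, hS1sq, mul_self_le_mul_self hdt hseg,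
          mul_nonneg (mul_nonneg ht0 (by linarith : (0:ℝ) ≤ 1 - t))
            (sub_nonneg.mpr key)]
    _ = _ := Real.sqrt_sq hnn

end Helpers

/-- For a nonempty closed convex constraint set `Ω` and `p̄ > 0`, a point
`x̄ ∈ Ω` satisfies `G(x̄, x̄, p̄) = min_{y ∈ Ω} G(y, x̄, p̄)` (fixed point of the MM
algorithm map) if and only if `x̄` minimizes `D(·, p̄)` over `Ω`. -/
theorem stmt_10 {n m : ℕ} (hm : 1 < m) (Om : Set (EuclideanSpace ℝ (Fin n)))
    (hOm : Om.Nonempty) (hOmcl : IsClosed Om) (hOmconv : Convex ℝ Om)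
    (Ω : Fin m → Set (EuclideanSpace ℝ (Fin n)))
    (hne : ∀ i, (Ω i).Nonempty) (hcl : ∀ i, IsClosed (Ω i)) (hconv : ∀ i, Convex ℝ (Ω i))
    (proj : Fin m → EuclideanSpace ℝ (Fin n) → EuclideanSpace ℝ (Fin n))
    (hproj : ∀ i y, proj i y ∈ Ω i ∧ ‖y - proj i y‖ = Metric.infDist y (Ω i))
    (pbar : ℝ) (hpbar : 0 < pbar)
    (xbar : EuclideanSpace ℝ (Fin n)) (hxbar : xbar ∈ Om) :
    (∀ y ∈ Om, Gmaj proj xbar xbar pbar ≤ Gmaj proj y xbar pbar) ↔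
      (∀ x ∈ Om, Dsmooth Ω xbar pbar ≤ Dsmooth Ω x pbar) := by
  have hm0 : 0 < m := by omega
  have hprojmem : ∀ i y, proj i y ∈ Ω i := fun i y => (hproj i y).1
  have hprojdist : ∀ i y, ‖y - proj i y‖ = Metric.infDist y (Ω i) := fun i y => (hproj i y).2
  have hGD : Gmaj proj xbar xbar pbar = Dsmooth Ω xbar pbar := by
    unfold Gmaj Dsmooth
    simp only [hprojdist]
  have hDleG : ∀ y, Dsmooth Ω y pbar ≤ Gmaj proj y xbar pbar := by
    intro y
    unfold Dsmooth Gmaj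
    refine lse_mono hm0 hpbar fun i => ?_
    refine Real.sqrt_le_sqrt ?_
    have h := Metric.infDist_le_dist_of_mem (x := y) (hprojmem i xbar)
    rw [dist_eq_norm] at h
    have hnn : 0 ≤ Metric.infDist y (Ω i) := Metric.infDist_nonneg
    nlinarith
  -- variational inequalities
  have hvar : ∀ i (y : EuclideanSpace ℝ (Fin n)), ∀ z ∈ Ω i,
      (inner ℝ (y - proj i y) (z - proj i y) : ℝ) ≤ 0 := by
    intro i y
    refine proj_inner (hconv i) (hprojmem i y) ?_
    intro w hw
    rw [hprojdist i y]
    have h := Metric.infDist_le_dist_of_mem (x := y) hw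
    rwa [dist_eq_norm] at h
  constructor
  · -- fixed point ⟹ minimizer of D
    intro hfix x hx
    by_contra hcon
    push_neg at hcon
    have hxne : x ≠ xbar := by
      rintro rfl
      exact lt_irrefl _ hcon
    have hC : 0 < ‖x - xbar‖ := by
      rw [norm_pos_iff, sub_ne_zero]
      exact hxne
    have hδpos : 0 < Dsmooth Ω xbar pbar - Dsmooth Ω x pbar := by linarith
    set t : ℝ := min 1 (pbar * (Dsmooth Ω xbar pbar - Dsmooth Ω x pbar) /
      (2 * ‖x - xbar‖ ^ 2)) with htdef
    have ht0 : 0 < t := lt_min one_pos (by positivity)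
    have ht1 : t ≤ 1 := min_le_left _ _
    set xt : EuclideanSpace ℝ (Fin n) := xbar + t • (x - xbar) with hxt
    have hxtmem : xt ∈ Om := by
      have h := hOmconv hxbar hx (by linarith : (0:ℝ) ≤ 1 - t) ht0.le (by ring)
      have e : xt = (1 - t) • xbar + t • x := by
        rw [hxt]
        module
      rw [e]
      exact h
    have hxtxbar : ‖xt - xbar‖ = t * ‖x - xbar‖ := by
      have e : xt - xbar = t • (x - xbar) := by rw [hxt]; abel
      rw [e, norm_smul, Real.norm_eq_abs, abs_of_nonneg ht0.le]
    -- key per-index bound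
    have hkey : ∀ i, Real.sqrt (‖xt - proj i xbar‖ ^ 2 + pbar ^ 2) ≤
        (1 - t) * Real.sqrt (Metric.infDist xbar (Ω i) ^ 2 + pbar ^ 2) +
          t * Real.sqrt (Metric.infDist x (Ω i) ^ 2 + pbar ^ 2) +
          t ^ 2 * ‖x - xbar‖ ^ 2 / pbar := by
      intro i
      have hba : ‖proj i xt - proj i xbar‖ ≤ ‖xt - xbar‖ :=
        proj_dist_le (hvar i xbar) (hvar i xt) (hprojmem i xbar) (hprojmem i xt)
      have hquad : ‖xt - proj i xbar‖ ^ 2 ≤ ‖xt - proj i xt‖ ^ 2 +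
          2 * (‖xt - xbar‖ * ‖proj i xt - proj i xbar‖) :=
        proj_quad (hvar i xbar (proj i xt) (hprojmem i xt))
      have hq2 : ‖xt - proj i xbar‖ ^ 2 ≤
          Metric.infDist xt (Ω i) ^ 2 + 2 * (t * ‖x - xbar‖) ^ 2 := by
        have h1 : ‖xt - proj i xt‖ = Metric.infDist xt (Ω i) := hprojdist i xt
        have h2 : ‖proj i xt - proj i xbar‖ ≤ t * ‖x - xbar‖ := by
          rw [← hxtxbar]; exact hba
        have h3 : 0 ≤ ‖proj i xt - proj i xbar‖ := norm_nonneg _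
        have h4 : 0 ≤ t * ‖x - xbar‖ := by positivity
        have h1sq : ‖xt - proj i xt‖ ^ 2 = Metric.infDist xt (Ω i) ^ 2 := by rw [h1]
        have h5 : ‖xt - xbar‖ * ‖proj i xt - proj i xbar‖ ≤
            (t * ‖x - xbar‖) * (t * ‖x - xbar‖) := by
          rw [hxtxbar]
          exact mul_le_mul_of_nonneg_left h2 h4
        nlinarith [hquad, h5, h1sq]
      have hs1 : Real.sqrt (‖xt - proj i xbar‖ ^ 2 + pbar ^ 2) ≤
          Real.sqrt (Metric.infDist xt (Ω i) ^ 2 + pbar ^ 2) +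
            2 * (t * ‖x - xbar‖) ^ 2 / (2 * pbar) :=
        sqrt_sq_add_le hpbar (by positivity) hq2
      have hseg : Metric.infDist xt (Ω i) ≤
          (1 - t) * Metric.infDist xbar (Ω i) + t * Metric.infDist x (Ω i) := by
        have hw : (1 - t) • proj i xbar + t • proj i x ∈ Ω i :=
          (hconv i) (hprojmem i xbar) (hprojmem i x) (by linarith) ht0.le (by ring)
        calc Metric.infDist xt (Ω i)
            ≤ dist xt ((1 - t) • proj i xbar + t • proj i x) :=
              Metric.infDist_le_dist_of_mem hw
          _ = ‖(1 - t) • (xbar - proj i xbar) + t • (x - proj i x)‖ := by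
              rw [dist_eq_norm]
              congr 1
              rw [hxt]
              module
          _ ≤ (1 - t) * ‖xbar - proj i xbar‖ + t * ‖x - proj i x‖ := by
              refine le_trans (norm_add_le _ _) ?_
              rw [norm_smul, norm_smul, Real.norm_eq_abs, Real.norm_eq_abs,
                abs_of_nonneg (by linarith : (0:ℝ) ≤ 1 - t), abs_of_nonneg ht0.le]
          _ = (1 - t) * Metric.infDist xbar (Ω i) + t * Metric.infDist x (Ω i) := by
              rw [hprojdist, hprojdist]
      have hs2 : Real.sqrt (Metric.infDist xt (Ω i) ^ 2 + pbar ^ 2) ≤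
          (1 - t) * Real.sqrt (Metric.infDist xbar (Ω i) ^ 2 + pbar ^ 2) +
            t * Real.sqrt (Metric.infDist x (Ω i) ^ 2 + pbar ^ 2) :=
        sqrt_combo hpbar ht0.le ht1 Metric.infDist_nonneg Metric.infDist_nonneg
          Metric.infDist_nonneg hseg
      have heps : 2 * (t * ‖x - xbar‖) ^ 2 / (2 * pbar) = t ^ 2 * ‖x - xbar‖ ^ 2 / pbar := by
        field_simp
      linarith [hs1, hs2, heps.ge, heps.le]
    -- chain of inequalities
    have hchain : Dsmooth Ω xbar pbar ≤ (1 - t) * Dsmooth Ω xbar pbar +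
        t * Dsmooth Ω x pbar + t ^ 2 * ‖x - xbar‖ ^ 2 / pbar := by
      calc Dsmooth Ω xbar pbar = Gmaj proj xbar xbar pbar := hGD.symm
        _ ≤ Gmaj proj xt xbar pbar := hfix xt hxtmem
        _ ≤ pbar * Real.log (∑ i, Real.exp
            (((1 - t) * Real.sqrt (Metric.infDist xbar (Ω i) ^ 2 + pbar ^ 2) +
              t * Real.sqrt (Metric.infDist x (Ω i) ^ 2 + pbar ^ 2) +
              t ^ 2 * ‖x - xbar‖ ^ 2 / pbar) / pbar)) := by
            unfold Gmaj
            exact lse_mono hm0 hpbar fun i => hkey i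
        _ ≤ (1 - t) * Dsmooth Ω xbar pbar + t * Dsmooth Ω x pbar +
            t ^ 2 * ‖x - xbar‖ ^ 2 / pbar := by
            unfold Dsmooth
            exact lse_convex hm0 hpbar ht0.le ht1 _ _ _
    -- derive contradiction
    have h1 : t * (Dsmooth Ω xbar pbar - Dsmooth Ω x pbar) ≤
        t ^ 2 * ‖x - xbar‖ ^ 2 / pbar := by nlinarith [hchain]
    have hB' : t * (Dsmooth Ω xbar pbar - Dsmooth Ω x pbar) * pbar ≤
        t ^ 2 * ‖x - xbar‖ ^ 2 := by
      have h := mul_le_mul_of_nonneg_right h1 hpbar.le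
      rwa [div_mul_cancel₀ _ hpbar.ne'] at h
    have htmin : t ≤ pbar * (Dsmooth Ω xbar pbar - Dsmooth Ω x pbar) /
        (2 * ‖x - xbar‖ ^ 2) := min_le_right _ _
    have hA : t * (2 * ‖x - xbar‖ ^ 2) ≤
        pbar * (Dsmooth Ω xbar pbar - Dsmooth Ω x pbar) :=
      (le_div_iff₀ (by positivity)).mp htmin
    have hA' : t * (t * (2 * ‖x - xbar‖ ^ 2)) ≤
        t * (pbar * (Dsmooth Ω xbar pbar - Dsmooth Ω x pbar)) :=
      mul_le_mul_of_nonneg_left hA ht0.le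
    have hX : 0 < t ^ 2 * ‖x - xbar‖ ^ 2 := by positivity
    nlinarith [hA', hB', hX]
  · -- minimizer of D ⟹ fixed point
    intro hmin y hy
    calc Gmaj proj xbar xbar pbar = Dsmooth Ω xbar pbar := hGD
      _ ≤ Dsmooth Ω y pbar := hmin y hy
      _ ≤ Gmaj proj y xbar pbar := hDleG y
end

section
/- Let Ω ⊆ ℝⁿ be a nonempty closed set and let v ∈ ℝⁿ be a nonzero vector. Then the extended-real-valued function x ↦ T_v(x; Ω) is convex on ℝⁿ if and only if the set Ω is convex. -/
open scoped ENNReal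

/-- The directional minimal time function
`T_v(x; Ω) = inf{t ≥ 0 : x + t v ∈ Ω}`, with value `+∞` when no such `t` exists. -/
noncomputable def dirMinTime {n : ℕ} (v : EuclideanSpace ℝ (Fin n))
    (Ω : Set (EuclideanSpace ℝ (Fin n))) (x : EuclideanSpace ℝ (Fin n)) : ℝ≥0∞ :=
  ⨅ (t : ℝ) (_ : 0 ≤ t ∧ x + t • v ∈ Ω), ENNReal.ofReal t

lemma dirMinTime_le {n : ℕ} {v : EuclideanSpace ℝ (Fin n)}
    {Ω : Set (EuclideanSpace ℝ (Fin n))} {x : EuclideanSpace ℝ (Fin n)} {t : ℝ}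
    (ht : 0 ≤ t) (hm : x + t • v ∈ Ω) : dirMinTime v Ω x ≤ ENNReal.ofReal t :=
  iInf₂_le t ⟨ht, hm⟩

lemma dirMinTime_mem_zero {n : ℕ} {v : EuclideanSpace ℝ (Fin n)}
    {Ω : Set (EuclideanSpace ℝ (Fin n))} {x : EuclideanSpace ℝ (Fin n)}
    (hx : x ∈ Ω) : dirMinTime v Ω x = 0 := by
  refine le_antisymm ?_ zero_le
  have := dirMinTime_le (v := v) (Ω := Ω) (x := x) (t := 0) le_rfl (by simpa using hx)
  simpa using this

/-- For a nonempty closed set `Ω` and a nonzero vector `v`, the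
extended-real-valued function `x ↦ T_v(x; Ω)` is convex on `ℝⁿ` if and only if `Ω`
is convex. -/
theorem stmt_12 {n : ℕ} (Ω : Set (EuclideanSpace ℝ (Fin n))) (hne : Ω.Nonempty)
    (hcl : IsClosed Ω) (v : EuclideanSpace ℝ (Fin n)) (hv : v ≠ 0) :
    (∀ x y : EuclideanSpace ℝ (Fin n), ∀ l ∈ Set.Ioo (0 : ℝ) 1,
      dirMinTime v Ω (l • x + (1 - l) • y) ≤
        ENNReal.ofReal l * dirMinTime v Ω x +
          ENNReal.ofReal (1 - l) * dirMinTime v Ω y) ↔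
      Convex ℝ Ω := by
  have hvn : 0 < ‖v‖ := norm_pos_iff.mpr hv
  constructor
  · intro hconv a ha b hb l k hl hk hlk
    rcases eq_or_lt_of_le hl with h0 | hlpos
    · have : k = 1 := by linarith
      simp [← h0, this, hb]
    rcases eq_or_lt_of_le hk with h0 | hkpos
    · have : l = 1 := by linarith
      simp [← h0, this, ha]
    have hk' : k = 1 - l := by linarith
    set z := l • a + k • b with hz
    have hTz : dirMinTime v Ω z = 0 := by
      have := hconv a b l ⟨hlpos, by linarith⟩
      rw [dirMinTime_mem_zero ha, dirMinTime_mem_zero hb] at this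
      simp only [mul_zero, add_zero] at this
      rw [hz, hk']
      exact le_antisymm this zero_le
    -- z ∈ closure Ω = Ω
    have : z ∈ closure Ω := by
      rw [Metric.mem_closure_iff]
      intro ε hε
      have hpos : (0 : ℝ≥0∞) < ENNReal.ofReal (ε / ‖v‖) :=
        ENNReal.ofReal_pos.mpr (div_pos hε hvn)
      rw [← hTz] at hpos
      unfold dirMinTime at hpos
      simp only [iInf_lt_iff] at hpos
      obtain ⟨t, ⟨ht0, htm⟩, hlt⟩ := hpos
      refine ⟨z + t • v, htm, ?_⟩
      have ht' : t < ε / ‖v‖ := by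
        rwa [ENNReal.ofReal_lt_ofReal_iff_of_nonneg ht0] at hlt
      have : dist z (z + t • v) = t * ‖v‖ := by
        rw [dist_eq_norm]
        have : z - (z + t • v) = -(t • v) := by abel
        rw [this, norm_neg, norm_smul, Real.norm_eq_abs, abs_of_nonneg ht0]
      rw [this]
      calc t * ‖v‖ < (ε / ‖v‖) * ‖v‖ := by
            exact mul_lt_mul_of_pos_right ht' hvn
        _ = ε := div_mul_cancel₀ _ (ne_of_gt hvn)
    rwa [hcl.closure_eq] at this
  · intro hΩ x y l hl
    rcases hl with ⟨hl0, hl1⟩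
    have h1l : (0:ℝ) < 1 - l := by linarith
    rcases eq_top_or_lt_top (dirMinTime v Ω x) with hx | hx
    · rw [hx, ENNReal.mul_top (by simp [ENNReal.ofReal_pos.mpr hl0, ne_of_gt])]
      simp
    rcases eq_top_or_lt_top (dirMinTime v Ω y) with hy | hy
    · rw [hy, ENNReal.mul_top (by simp [ENNReal.ofReal_pos.mpr h1l, ne_of_gt])]
      simp
    refine ENNReal.le_of_forall_pos_le_add fun ε hε hfin => ?_
    have hεE : (0 : ℝ≥0∞) < ENNReal.ofReal (ε : ℝ) := by
      rw [ENNReal.ofReal_coe_nnreal]; exact_mod_cast hε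
    -- extract near-optimal times
    have hx' : dirMinTime v Ω x < dirMinTime v Ω x + ENNReal.ofReal (ε : ℝ) :=
      ENNReal.lt_add_right hx.ne (ne_of_gt hεE)
    have hy' : dirMinTime v Ω y < dirMinTime v Ω y + ENNReal.ofReal (ε : ℝ) :=
      ENNReal.lt_add_right hy.ne (ne_of_gt hεE)
    conv_lhs at hx' => unfold dirMinTime
    conv_lhs at hy' => unfold dirMinTime
    simp only [iInf_lt_iff] at hx' hy'
    obtain ⟨t, ⟨ht0, htm⟩, hlt⟩ := hx'
    obtain ⟨s, ⟨hs0, hsm⟩, hls⟩ := hy'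
    have hmem : (l • x + (1 - l) • y) + (l * t + (1 - l) * s) • v ∈ Ω := by
      have := hΩ htm hsm (le_of_lt hl0) (le_of_lt h1l) (by ring)
      convert this using 1
      module
    have hT : dirMinTime v Ω (l • x + (1 - l) • y)
        ≤ ENNReal.ofReal (l * t + (1 - l) * s) :=
      dirMinTime_le (by positivity) hmem
    have hsplit : ENNReal.ofReal (l * t + (1 - l) * s)
        = ENNReal.ofReal l * ENNReal.ofReal t
          + ENNReal.ofReal (1 - l) * ENNReal.ofReal s := by
      rw [ENNReal.ofReal_add (by positivity) (by positivity),
        ENNReal.ofReal_mul (le_of_lt hl0), ENNReal.ofReal_mul (le_of_lt h1l)]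
    have hone : ENNReal.ofReal l + ENNReal.ofReal (1 - l) = 1 := by
      rw [← ENNReal.ofReal_add (le_of_lt hl0) (le_of_lt h1l)]
      norm_num
    calc dirMinTime v Ω (l • x + (1 - l) • y)
        ≤ ENNReal.ofReal l * ENNReal.ofReal t
          + ENNReal.ofReal (1 - l) * ENNReal.ofReal s := by rw [← hsplit]; exact hT
      _ ≤ ENNReal.ofReal l * (dirMinTime v Ω x + ENNReal.ofReal (ε : ℝ))
          + ENNReal.ofReal (1 - l) * (dirMinTime v Ω y + ENNReal.ofReal (ε : ℝ)) :=
          add_le_add (mul_le_mul_right hlt.le _) (mul_le_mul_right hls.le _)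
      _ = (ENNReal.ofReal l * dirMinTime v Ω x
          + ENNReal.ofReal (1 - l) * dirMinTime v Ω y)
          + (ENNReal.ofReal l + ENNReal.ofReal (1 - l)) * ENNReal.ofReal (ε : ℝ) := by
          ring
      _ = (ENNReal.ofReal l * dirMinTime v Ω x
          + ENNReal.ofReal (1 - l) * dirMinTime v Ω y) + ε := by
          rw [hone, one_mul, ENNReal.ofReal_coe_nnreal]
end

section
/- Let Ω, Ω₁, …, Ω_m ⊆ ℝⁿ be nonempty closed sets, let v₁, …, v_m ∈ ℝⁿ be nonzero vectors, and define S₁(x) := max{T_{v_i}(x; Ω_i) : i = 1, …, m}. Suppose Ω ∩ dom S₁ ≠ ∅ and that at least one of the sets Ω, Ω₁, …, Ω_m is compact. Then there exists x̄ ∈ Ω with S₁(x̄) ≤ S₁(x) for all x ∈ Ω. -/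
open scoped ENNReal
open Pointwise

/-- `S₁(x) = max{T_{vᵢ}(x; Ωᵢ) : i = 1, …, m}`. -/
noncomputable def S1 {n m : ℕ} (v : Fin m → EuclideanSpace ℝ (Fin n))
    (Ω : Fin m → Set (EuclideanSpace ℝ (Fin n))) (x : EuclideanSpace ℝ (Fin n)) : ℝ≥0∞ :=
  ⨆ i, dirMinTime (v i) (Ω i) x

lemma dirMinTime_le_ofReal {n : ℕ} {v : EuclideanSpace ℝ (Fin n)}
    {Ω : Set (EuclideanSpace ℝ (Fin n))} {x : EuclideanSpace ℝ (Fin n)} {t : ℝ}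
    (ht : 0 ≤ t) (hmem : x + t • v ∈ Ω) :
    dirMinTime v Ω x ≤ ENNReal.ofReal t :=
  iInf_le_of_le t (iInf_le _ ⟨ht, hmem⟩)

/-- Attainment of the infimum in `dirMinTime` below a finite level. -/
lemma dirMinTime_exists {n : ℕ} {v : EuclideanSpace ℝ (Fin n)}
    {Ω : Set (EuclideanSpace ℝ (Fin n))} (hΩ : IsClosed Ω)
    {x : EuclideanSpace ℝ (Fin n)} {c : ℝ≥0∞} (hc : c ≠ ⊤)
    (h : dirMinTime v Ω x ≤ c) :
    ∃ t : ℝ, 0 ≤ t ∧ t ≤ c.toReal ∧ x + t • v ∈ Ω := by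
  set A : Set ℝ := {t : ℝ | 0 ≤ t ∧ x + t • v ∈ Ω} with hA
  have hAne : A.Nonempty := by
    by_contra hemp
    rw [Set.not_nonempty_iff_eq_empty] at hemp
    have : dirMinTime v Ω x = ⊤ := by
      rw [dirMinTime]
      rw [iInf_eq_top]
      intro t
      rw [iInf_eq_top]
      intro ht
      exact absurd (Set.eq_empty_iff_forall_notMem.1 hemp t ht) (fun h => h)
    exact hc (top_unique (this ▸ h))
  have hAcl : IsClosed A := by
    have hcont : Continuous fun t : ℝ => x + t • v :=
      continuous_const.add (continuous_id.smul continuous_const)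
    exact isClosed_Ici.inter (hΩ.preimage hcont)
  have hAbdd : BddBelow A := ⟨0, fun t ht => ht.1⟩
  have hmem : sInf A ∈ A := hAcl.csInf_mem hAne hAbdd
  refine ⟨sInf A, hmem.1, ?_, hmem.2⟩
  have hle : ENNReal.ofReal (sInf A) ≤ dirMinTime v Ω x := by
    rw [dirMinTime]
    refine le_iInf fun t => le_iInf fun ht => ?_
    exact ENNReal.ofReal_le_ofReal (csInf_le hAbdd ht)
  have := hle.trans h
  rwa [ENNReal.ofReal_le_iff_le_toReal hc] at this

/-- The sublevel set of `dirMinTime` at a finite level is a translate-sum. -/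
lemma dirMinTime_sublevel_eq {n : ℕ} {v : EuclideanSpace ℝ (Fin n)}
    {Ω : Set (EuclideanSpace ℝ (Fin n))} (hΩ : IsClosed Ω) {c : ℝ≥0∞} (hc : c ≠ ⊤) :
    {x | dirMinTime v Ω x ≤ c} =
      ((fun t : ℝ => -(t • v)) '' Set.Icc 0 c.toReal) +ᵥ Ω := by
  ext x
  constructor
  · intro hx
    obtain ⟨t, ht0, htc, hmem⟩ := dirMinTime_exists hΩ hc hx
    refine ⟨-(t • v), ⟨t, ⟨ht0, htc⟩, rfl⟩, x + t • v, hmem, ?_⟩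
    simp only [vadd_eq_add]
    abel
  · rintro ⟨w, ⟨t, ⟨ht0, htc⟩, rfl⟩, y, hy, rfl⟩
    have hx : (-(t • v) +ᵥ y) + t • v = y := by
      simp only [vadd_eq_add]
      abel
    have hy' : (-(t • v) +ᵥ y) + t • v ∈ Ω := by rwa [hx]
    have := dirMinTime_le_ofReal (v := v) (Ω := Ω) (x := -(t • v) +ᵥ y) ht0 hy'
    refine this.trans ?_
    rw [ENNReal.ofReal_le_iff_le_toReal hc]
    exact htc

lemma dirMinTime_lsc {n : ℕ} {v : EuclideanSpace ℝ (Fin n)}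
    {Ω : Set (EuclideanSpace ℝ (Fin n))} (hΩ : IsClosed Ω) :
    LowerSemicontinuous (dirMinTime v Ω) := by
  rw [lowerSemicontinuous_iff_isClosed_preimage]
  intro c
  rcases eq_or_ne c ⊤ with rfl | hc
  · have : (dirMinTime v Ω) ⁻¹' Set.Iic ⊤ = Set.univ := by
      ext x; simp
    rw [this]; exact isClosed_univ
  · have : (dirMinTime v Ω) ⁻¹' Set.Iic c = {x | dirMinTime v Ω x ≤ c} := rfl
    rw [this, dirMinTime_sublevel_eq hΩ hc]
    refine hΩ.vadd_left_of_isCompact ?_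
    exact (isCompact_Icc.image (by fun_prop))

lemma S1_lsc {n m : ℕ} {v : Fin m → EuclideanSpace ℝ (Fin n)}
    {Ω : Fin m → Set (EuclideanSpace ℝ (Fin n))} (hcl : ∀ i, IsClosed (Ω i)) :
    LowerSemicontinuous (S1 v Ω) :=
  lowerSemicontinuous_iSup fun i => dirMinTime_lsc (hcl i)

/-- A lower semicontinuous `ℝ≥0∞`-valued function attains its minimum on a
nonempty compact set. -/
lemma lsc_exists_min {X : Type*} [TopologicalSpace X] [T2Space X] {f : X → ℝ≥0∞}
    (hf : LowerSemicontinuous f) {s : Set X} (hs : IsCompact s) (hne : s.Nonempty) :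
    ∃ a ∈ s, ∀ b ∈ s, f a ≤ f b := by
  set α : ℝ≥0∞ := ⨅ x ∈ s, f x with hα
  have hαle : ∀ b ∈ s, α ≤ f b := fun b hb => iInf₂_le b hb
  rcases eq_or_ne α ⊤ with htop | hfin
  · obtain ⟨a, ha⟩ := hne
    refine ⟨a, ha, fun b hb => ?_⟩
    have := hαle b hb
    rw [htop] at this
    exact le_top.trans this
  · set C : ℕ → Set X := fun k => s ∩ {x | f x ≤ α + ((k : ℝ≥0∞) + 1)⁻¹} with hC
    have hCcl : ∀ k, IsClosed (C k) := fun k =>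
      hs.isClosed.inter (lowerSemicontinuous_iff_isClosed_preimage.1 hf _)
    have hCcpt : ∀ k, IsCompact (C k) := fun k =>
      hs.inter_right (lowerSemicontinuous_iff_isClosed_preimage.1 hf _)
    have hCne : ∀ k, (C k).Nonempty := by
      intro k
      have hlt : α < α + ((k : ℝ≥0∞) + 1)⁻¹ :=
        ENNReal.lt_add_right hfin (by simp [ENNReal.inv_eq_zero])
      rw [hα, iInf_lt_iff] at hlt
      obtain ⟨x, hx⟩ := hlt
      rw [iInf_lt_iff] at hx
      obtain ⟨hxs, hx⟩ := hx
      exact ⟨x, hxs, hx.le⟩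
    have hanti : Antitone C := by
      intro i j hij
      refine Set.inter_subset_inter_right _ fun x hx => ?_
      simp only [Set.mem_setOf_eq] at hx ⊢
      refine hx.trans ?_
      gcongr
    have hdir : Directed (fun a b : Set X => a ⊇ b) C := fun i j =>
      ⟨max i j, hanti (le_max_left i j), hanti (le_max_right i j)⟩
    obtain ⟨a, ha⟩ :=
      IsCompact.nonempty_iInter_of_directed_nonempty_isCompact_isClosed C hdir hCne hCcpt hCcl
    simp only [Set.mem_iInter] at ha
    have has : a ∈ s := (ha 0).1
    refine ⟨a, has, fun b hb => ?_⟩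
    refine le_trans ?_ (hαle b hb)
    refine ENNReal.le_of_forall_pos_le_add fun ε hε _ => ?_
    obtain ⟨k, hk⟩ := ENNReal.exists_inv_nat_lt (a := (ε : ℝ≥0∞)) (by exact_mod_cast hε.ne')
    have h1 : f a ≤ α + ((k : ℝ≥0∞) + 1)⁻¹ := (ha k).2
    have h2 : ((k : ℝ≥0∞) + 1)⁻¹ ≤ (k : ℝ≥0∞)⁻¹ := by
      gcongr; exact le_add_of_nonneg_right zero_le_one
    exact h1.trans (by gcongr; exact h2.trans hk.le)

/-- For nonempty closed sets `Ω, Ω₁, …, Ω_m`, nonzero `v₁, …, v_m`, if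
`Ω ∩ dom S₁ ≠ ∅` and at least one of `Ω, Ω₁, …, Ω_m` is compact, then `S₁` attains its
minimum over `Ω`. -/
theorem stmt_13 {n m : ℕ} (hm : 0 < m) (Om : Set (EuclideanSpace ℝ (Fin n)))
    (hOm : Om.Nonempty) (hOmcl : IsClosed Om)
    (Ω : Fin m → Set (EuclideanSpace ℝ (Fin n)))
    (hne : ∀ i, (Ω i).Nonempty) (hcl : ∀ i, IsClosed (Ω i))
    (v : Fin m → EuclideanSpace ℝ (Fin n)) (hv : ∀ i, v i ≠ 0)
    (hdom : ∃ x ∈ Om, S1 v Ω x ≠ ⊤)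
    (hcpt : IsCompact Om ∨ ∃ i, IsCompact (Ω i)) :
    ∃ xbar ∈ Om, ∀ x ∈ Om, S1 v Ω xbar ≤ S1 v Ω x := by
  obtain ⟨x₀, hx₀, hx₀fin⟩ := hdom
  set c : ℝ≥0∞ := S1 v Ω x₀ with hc
  have hlsc : LowerSemicontinuous (S1 v Ω) := S1_lsc hcl
  set K : Set (EuclideanSpace ℝ (Fin n)) := Om ∩ {x | S1 v Ω x ≤ c} with hK
  have hKne : K.Nonempty := ⟨x₀, hx₀, hc.ge⟩
  have hKcl : IsClosed K :=
    hOmcl.inter (lowerSemicontinuous_iff_isClosed_preimage.1 hlsc _)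
  have hKcpt : IsCompact K := by
    rcases hcpt with hOmc | ⟨i, hΩi⟩
    · exact hOmc.inter_right (lowerSemicontinuous_iff_isClosed_preimage.1 hlsc _)
    · -- K is contained in a compact set
      have hsub : K ⊆ ((fun t : ℝ => -(t • v i)) '' Set.Icc 0 c.toReal) +ᵥ Ω i := by
        rw [← dirMinTime_sublevel_eq (hcl i) hx₀fin]
        intro x hx
        exact le_trans (le_iSup (fun j => dirMinTime (v j) (Ω j) x) i) hx.2
      have hbig : IsCompact (((fun t : ℝ => -(t • v i)) '' Set.Icc 0 c.toReal) +ᵥ Ω i) := by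
        have h1 : IsCompact ((fun t : ℝ => -(t • v i)) '' Set.Icc 0 c.toReal) :=
          isCompact_Icc.image (by fun_prop)
        have : ((fun t : ℝ => -(t • v i)) '' Set.Icc 0 c.toReal) +ᵥ Ω i
            = ((fun t : ℝ => -(t • v i)) '' Set.Icc 0 c.toReal) + Ω i := by
          ext x
          simp only [Set.mem_add]
          constructor
          · rintro ⟨w, hw, y, hy, rfl⟩; exact ⟨w, hw, y, hy, rfl⟩
          · rintro ⟨w, hw, y, hy, rfl⟩; exact ⟨w, hw, y, hy, rfl⟩
        rw [this]
        exact h1.add hΩi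
      exact hbig.of_isClosed_subset hKcl hsub
  obtain ⟨xbar, hxbarK, hmin⟩ := lsc_exists_min hlsc hKcpt hKne
  refine ⟨xbar, hxbarK.1, fun x hx => ?_⟩
  by_cases hxc : S1 v Ω x ≤ c
  · exact hmin x ⟨hx, hxc⟩
  · exact (hxbarK.2.trans (le_of_not_ge hxc))
end

section
/- Let Ω ⊆ ℝⁿ be a nonempty closed convex set and let g : Ω → ℝ be a nonnegative convex function. Then the function h(x) := (g(x))² is strictly convex on Ω if and only if g is not constant on any segment [x, y] ⊆ Ω with x ≠ y. -/
/-- For a nonempty closed convex set `Ω` and a nonnegative convex function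
`g` on `Ω`, the function `h(x) = g(x)²` is strictly convex on `Ω` if and only if `g` is
not constant on any nondegenerate segment `[x, y] ⊆ Ω`. -/
theorem stmt_16 {n : ℕ} (Ω : Set (EuclideanSpace ℝ (Fin n))) (hne : Ω.Nonempty)
    (hcl : IsClosed Ω) (hconv : Convex ℝ Ω)
    (g : EuclideanSpace ℝ (Fin n) → ℝ) (hg0 : ∀ x ∈ Ω, 0 ≤ g x)
    (hgconv : ConvexOn ℝ Ω g) :
    StrictConvexOn ℝ Ω (fun x => g x ^ 2) ↔
      ∀ x ∈ Ω, ∀ y ∈ Ω, x ≠ y →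
        ∃ u ∈ segment ℝ x y, ∃ w ∈ segment ℝ x y, g u ≠ g w := by
  constructor
  · intro hsc x hx y hy hxy
    by_contra hcon
    push_neg at hcon
    have hm : (1/2 : ℝ) • x + (1/2 : ℝ) • y ∈ segment ℝ x y :=
      ⟨1/2, 1/2, by norm_num, by norm_num, by norm_num, rfl⟩
    have h1 := hcon _ hm _ (left_mem_segment ℝ x y)
    have h2 := hcon _ hm _ (right_mem_segment ℝ x y)
    have hlt := hsc.2 hx hy hxy (by norm_num : (0:ℝ) < 1/2)
      (by norm_num : (0:ℝ) < 1/2) (by norm_num)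
    simp only [smul_eq_mul] at hlt
    rw [← h1, ← h2] at hlt
    linarith
  · intro H
    refine ⟨hconv, ?_⟩
    intro x hx y hy hxy a b ha hb hab
    obtain rfl : b = 1 - a := by linarith
    have hz : a • x + (1-a) • y ∈ Ω := hconv hx hy ha.le hb.le hab
    have hgz : 0 ≤ g (a • x + (1-a) • y) := hg0 _ hz
    have hgle : g (a • x + (1-a) • y) ≤ a * g x + (1-a) * g y := by
      have := hgconv.2 hx hy ha.le hb.le hab
      simpa using this
    simp only [smul_eq_mul]
    by_cases hgg : g x = g y
    · -- endpoints equal: find v on segment with g v < g x, deduce g z < g x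
      obtain ⟨u, hu, w, hw, huw⟩ := H x hx y hy hxy
      have key : ∀ p ∈ segment ℝ x y, g p ≤ g x := by
        rintro p ⟨s, t, hs, ht, hst, rfl⟩
        have h' := hgconv.2 hx hy hs ht hst
        simp only [smul_eq_mul] at h'
        rw [← hgg] at h'
        calc g (s • x + t • y) ≤ s * g x + t * g x := h'
          _ = g x := by rw [← add_mul, hst, one_mul]
      have hv' : ∃ v ∈ segment ℝ x y, g v < g x := by
        rcases lt_or_ge (g u) (g x) with h | h
        · exact ⟨u, hu, h⟩
        · have hu' : g u = g x := le_antisymm (key u hu) h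
          exact ⟨w, hw, lt_of_le_of_ne (key w hw) fun hwc => huw (hu'.trans hwc.symm)⟩
      obtain ⟨v, ⟨s, t, hs, ht, hst, rfl⟩, hv⟩ := hv'
      obtain rfl : t = 1 - s := by linarith
      have hvΩ : s • x + (1-s) • y ∈ Ω := hconv hx hy hs ht hst
      have hs1 : s < 1 := by
        rcases lt_or_eq_of_le (by linarith : s ≤ 1) with h | h
        · exact h
        · exfalso
          have hveq : s • x + (1-s) • y = x := by rw [h]; norm_num
          rw [hveq] at hv; exact absurd hv (lt_irrefl _)
      have hs0 : 0 < s := by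
        rcases lt_or_eq_of_le hs with h | h
        · exact h
        · exfalso
          have hveq : s • x + (1-s) • y = y := by rw [← h]; simp
          rw [hveq, ← hgg] at hv; exact absurd hv (lt_irrefl _)
      have hgzlt : g (a • x + (1-a) • y) < g x := by
        rcases lt_trichotomy a s with hc | hc | hc
        · -- a < s : z = (a/s) • v + (1 - a/s) • y
          have heq : a • x + (1-a) • y = (a/s) • (s • x + (1-s) • y) + (1 - a/s) • y := by
            match_scalars <;> field_simp <;> ring
          have h1 : (0:ℝ) < a/s := by positivity
          have h2 : (0:ℝ) ≤ 1 - a/s := by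
            rw [sub_nonneg, div_le_one hs0]; linarith
          have h3 : a/s + (1 - a/s) = 1 := by ring
          have hle := hgconv.2 hvΩ hy h1.le h2 h3
          simp only [smul_eq_mul] at hle
          rw [heq, ← hgg] at *
          have := mul_lt_mul_of_pos_left hv h1
          linarith [hle]
        · rw [hc]; exact hv
        · -- s < a : z = ((a-s)/(1-s)) • x + (1 - (a-s)/(1-s)) • v
          have h1s : (0:ℝ) < 1 - s := by linarith
          have heq : a • x + (1-a) • y
              = ((a-s)/(1-s)) • x + (1 - (a-s)/(1-s)) • (s • x + (1-s) • y) := by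
            match_scalars <;> field_simp <;> ring
          have h1 : (0:ℝ) ≤ (a-s)/(1-s) := div_nonneg (by linarith) (by linarith)
          have h2 : (0:ℝ) < 1 - (a-s)/(1-s) := by
            rw [sub_pos, div_lt_one h1s]; linarith
          have h3 : (a-s)/(1-s) + (1 - (a-s)/(1-s)) = 1 := by ring
          have hle := hgconv.2 hx hvΩ h1 h2.le h3
          simp only [smul_eq_mul] at hle
          rw [heq]
          have := mul_lt_mul_of_pos_left hv h2
          linarith [hle]
      rw [← hgg]
      nlinarith [hgzlt, hgz]
    · -- endpoints differ: strict convexity of squaring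
      have hgx : 0 ≤ g x := hg0 x hx
      have hgy : 0 ≤ g y := hg0 y hy
      have hne0 : g x - g y ≠ 0 := sub_ne_zero.mpr hgg
      have hd : 0 < (g x - g y)^2 := by positivity
      have hb' : (0:ℝ) < 1 - a := hb
      nlinarith [mul_pos ha hb', mul_pos (mul_pos ha hb') hd,
        mul_nonneg (sub_nonneg.mpr hgle) (add_nonneg hgz
          (by nlinarith : (0:ℝ) ≤ a * g x + (1-a) * g y))]
end

section
/- Let Ω ⊆ ℝⁿ be a nonempty closed convex set and let v ∈ ℝⁿ be a nonzero vector. If x, y ∈ dom T_v(·; Ω) \ Ω and x − y ∈ ℝv (i.e., x − y = λv for some λ ∈ ℝ), then Π_v(x; Ω) = Π_v(y; Ω), that is, x + T_v(x; Ω)·v = y + T_v(y; Ω)·v. -/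
open scoped ENNReal

lemma dirMinTime_spec {n : ℕ} (Ω : Set (EuclideanSpace ℝ (Fin n)))
    (hcl : IsClosed Ω) (v x : EuclideanSpace ℝ (Fin n))
    (h : dirMinTime v Ω x ≠ ⊤) :
    0 ≤ (dirMinTime v Ω x).toReal ∧ x + (dirMinTime v Ω x).toReal • v ∈ Ω ∧
      ∀ t : ℝ, 0 ≤ t → x + t • v ∈ Ω → (dirMinTime v Ω x).toReal ≤ t := by
  set S : Set ℝ := {t | 0 ≤ t ∧ x + t • v ∈ Ω} with hS
  have hSne : S.Nonempty := by
    by_contra hemp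
    apply h
    rw [dirMinTime, iInf_eq_top]
    intro t
    rw [iInf_eq_top]
    intro ht
    exact absurd ⟨t, ht⟩ hemp
  have hSbdd : BddBelow S := ⟨0, fun t ht => ht.1⟩
  have hSclosed : IsClosed S := by
    have : S = Set.Ici (0:ℝ) ∩ (fun t : ℝ => x + t • v) ⁻¹' Ω := by
      ext t; simp only [hS, Set.mem_setOf_eq, Set.mem_inter_iff, Set.mem_Ici, Set.mem_preimage]
    rw [this]
    exact isClosed_Ici.inter (hcl.preimage (by continuity))
  have hmem : sInf S ∈ S := hSclosed.csInf_mem hSne hSbdd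
  have hval : dirMinTime v Ω x = ENNReal.ofReal (sInf S) := by
    apply le_antisymm
    · exact iInf₂_le (sInf S) hmem
    · refine le_iInf₂ fun t ht => ?_
      exact ENNReal.ofReal_le_ofReal (csInf_le hSbdd ht)
  have htr : (dirMinTime v Ω x).toReal = sInf S := by
    rw [hval, ENNReal.toReal_ofReal hmem.1]
  refine ⟨by rw [htr]; exact hmem.1, by rw [htr]; exact hmem.2, fun t ht htΩ => ?_⟩
  rw [htr]
  exact csInf_le hSbdd ⟨ht, htΩ⟩

lemma convex_between {n : ℕ} {Ω : Set (EuclideanSpace ℝ (Fin n))}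
    (hconv : Convex ℝ Ω) {v p : EuclideanSpace ℝ (Fin n)} {a b : ℝ}
    (ha : a ≤ 0) (hb : 0 < b) (hA : p + a • v ∈ Ω) (hB : p + b • v ∈ Ω) : p ∈ Ω := by
  have hba : 0 < b - a := by linarith
  have h1 : (0:ℝ) ≤ b / (b - a) := by positivity
  have h2 : (0:ℝ) ≤ -a / (b - a) := by
    apply div_nonneg <;> linarith
  have h3 : b / (b - a) + -a / (b - a) = 1 := by
    field_simp; ring
  have := hconv hA hB h1 h2 h3
  have heq : (b / (b - a)) • (p + a • v) + (-a / (b - a)) • (p + b • v) = p := by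
    have hne : b - a ≠ 0 := ne_of_gt hba
    rw [smul_add, smul_add, smul_smul, smul_smul]
    calc (b / (b - a)) • p + (b / (b - a) * a) • v + ((-a / (b - a)) • p + (-a / (b - a) * b) • v)
        = ((b / (b - a)) + (-a / (b - a))) • p + ((b / (b - a) * a) + (-a / (b - a) * b)) • v := by
          rw [add_smul, add_smul]; abel
      _ = p := by
          rw [h3]
          have : b / (b - a) * a + -a / (b - a) * b = 0 := by field_simp; ring
          rw [this, one_smul, zero_smul, add_zero]
  rwa [heq] at this

/-- For a nonempty closed convex set `Ω` and a nonzero vector `v`, if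
`x, y ∈ dom T_v(·; Ω) \ Ω` and `x − y ∈ ℝv`, then `Π_v(x; Ω) = Π_v(y; Ω)`, i.e.
`x + T_v(x; Ω)·v = y + T_v(y; Ω)·v`. -/
theorem stmt_17 {n : ℕ} (Ω : Set (EuclideanSpace ℝ (Fin n))) (hne : Ω.Nonempty)
    (hcl : IsClosed Ω) (hconv : Convex ℝ Ω)
    (v : EuclideanSpace ℝ (Fin n)) (hv : v ≠ 0)
    (x y : EuclideanSpace ℝ (Fin n))
    (hxdom : dirMinTime v Ω x ≠ ⊤) (hxΩ : x ∉ Ω)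
    (hydom : dirMinTime v Ω y ≠ ⊤) (hyΩ : y ∉ Ω)
    (hxy : ∃ l : ℝ, x - y = l • v) :
    x + (dirMinTime v Ω x).toReal • v = y + (dirMinTime v Ω y).toReal • v := by
  obtain ⟨l, hl⟩ := hxy
  have hx := dirMinTime_spec Ω hcl v x hxdom
  have hy := dirMinTime_spec Ω hcl v y hydom
  set Tx := (dirMinTime v Ω x).toReal with hTx
  set Ty := (dirMinTime v Ω y).toReal with hTy
  obtain ⟨hTx0, hxmem, hxmin⟩ := hx
  obtain ⟨hTy0, hymem, hymin⟩ := hy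
  have hxeq : x = y + l • v := by
    rw [← hl]; abel
  have hTxpos : 0 < Tx := by
    rcases lt_or_eq_of_le hTx0 with h | h
    · exact h
    · exfalso; apply hxΩ; rw [← h, zero_smul, add_zero] at hxmem; exact hxmem
  have hTypos : 0 < Ty := by
    rcases lt_or_eq_of_le hTy0 with h | h
    · exact h
    · exfalso; apply hyΩ; rw [← h, zero_smul, add_zero] at hymem; exact hymem
  -- x + Tx • v = y + (l + Tx) • v
  have hxin : y + (l + Tx) • v ∈ Ω := by
    rw [add_smul, ← add_assoc, ← hxeq]; exact hxmem
  -- y + Ty • v = x + (Ty - l) • v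
  have hyin : x + (Ty - l) • v ∈ Ω := by
    rw [hxeq, sub_smul, add_assoc]
    rw [show l • v + (Ty • v - l • v) = Ty • v by abel]
    exact hymem
  have h1 : 0 ≤ l + Tx := by
    by_contra hneg
    push_neg at hneg
    exact hyΩ (convex_between hconv (le_of_lt hneg) hTypos hxin hymem)
  have h2 : 0 ≤ Ty - l := by
    by_contra hneg
    push_neg at hneg
    exact hxΩ (convex_between hconv (le_of_lt hneg) hTxpos hyin hxmem)
  have hle1 : Ty ≤ l + Tx := hymin _ h1 hxin
  have hle2 : Tx ≤ Ty - l := hxmin _ h2 hyin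
  have : Ty = l + Tx := by linarith
  rw [this, hxeq, add_smul, ← add_assoc]
end

section
/- Let Ω ⊆ ℝⁿ be a nonempty closed strictly convex set and let v ∈ ℝⁿ be a nonzero vector. Then T_v(·; Ω) is not constant on any segment [x, y] ⊆ dom T_v(·; Ω) \ Ω with x ≠ y; that is, for any such segment there exist u, w ∈ [x, y] with T_v(u; Ω) ≠ T_v(w; Ω). -/
open scoped ENNReal

lemma dirMinTime_attained {n : ℕ} (v : EuclideanSpace ℝ (Fin n))
    (Ω : Set (EuclideanSpace ℝ (Fin n))) (hcl : IsClosed Ω)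
    (z : EuclideanSpace ℝ (Fin n)) (hz : dirMinTime v Ω z ≠ ⊤) :
    ∃ τ : ℝ, 0 ≤ τ ∧ z + τ • v ∈ Ω ∧ dirMinTime v Ω z = ENNReal.ofReal τ ∧
      ∀ t : ℝ, 0 ≤ t → z + t • v ∈ Ω → τ ≤ t := by
  set S : Set ℝ := {t : ℝ | 0 ≤ t ∧ z + t • v ∈ Ω} with hS
  have hSne : S.Nonempty := by
    by_contra h
    apply hz
    rw [dirMinTime]
    exact iInf_eq_top.mpr fun t => iInf_neg (fun ht => h ⟨t, ht⟩)
  have hc : Continuous fun t : ℝ => z + t • v := by fun_prop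
  have hSclosed : IsClosed S := isClosed_Ici.inter (hcl.preimage hc)
  have hbdd : BddBelow S := ⟨0, fun t ht => ht.1⟩
  have hτS : sInf S ∈ S := hSclosed.csInf_mem hSne hbdd
  refine ⟨sInf S, hτS.1, hτS.2, ?_, fun t ht0 htΩ => csInf_le hbdd ⟨ht0, htΩ⟩⟩
  refine le_antisymm (iInf₂_le (sInf S) hτS) ?_
  exact le_iInf₂ fun t ht => ENNReal.ofReal_le_ofReal (csInf_le hbdd ht)

/-- For a nonempty closed strictly convex set `Ω` and a nonzero vector
`v`, the function `T_v(·; Ω)` is not constant on any nondegenerate segment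
`[x, y] ⊆ dom T_v(·; Ω) \ Ω`. -/
theorem stmt_18 {n : ℕ} (Ω : Set (EuclideanSpace ℝ (Fin n))) (hne : Ω.Nonempty)
    (hcl : IsClosed Ω) (hsc : StrictConvex ℝ Ω)
    (v : EuclideanSpace ℝ (Fin n)) (hv : v ≠ 0)
    (x y : EuclideanSpace ℝ (Fin n)) (hxy : x ≠ y)
    (hseg : segment ℝ x y ⊆ {z | dirMinTime v Ω z ≠ ⊤} \ Ω) :
    ∃ u ∈ segment ℝ x y, ∃ w ∈ segment ℝ x y,
      dirMinTime v Ω u ≠ dirMinTime v Ω w := by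
  by_contra hcon
  push_neg at hcon
  have hxmem := hseg (left_mem_segment ℝ x y)
  have hymem := hseg (right_mem_segment ℝ x y)
  obtain ⟨τ, hτ0, hxτ, hTx, hmin⟩ := dirMinTime_attained v Ω hcl x hxmem.1
  obtain ⟨σ, hσ0, hyσ, hTy, _⟩ := dirMinTime_attained v Ω hcl y hymem.1
  have hTxy : dirMinTime v Ω x = dirMinTime v Ω y :=
    hcon x (left_mem_segment ℝ x y) y (right_mem_segment ℝ x y)
  have hστ : σ = τ := by
    have := hTxy
    rw [hTx, hTy] at this
    exact ((ENNReal.ofReal_eq_ofReal_iff hτ0 hσ0).mp this).symm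
  subst hστ
  have hτpos : 0 < σ := by
    rcases hτ0.lt_or_eq with h | h
    · exact h
    · exfalso
      apply hxmem.2
      rw [← h] at hxτ
      simpa using hxτ
  set m : EuclideanSpace ℝ (Fin n) := (1/2 : ℝ) • x + (1/2 : ℝ) • y with hm
  have hmseg : m ∈ segment ℝ x y :=
    ⟨1/2, 1/2, by norm_num, by norm_num, by norm_num, rfl⟩
  have hne' : x + σ • v ≠ y + σ • v := fun h => hxy (add_right_cancel h)
  have hint : (1/2 : ℝ) • (x + σ • v) + (1/2 : ℝ) • (y + σ • v) ∈ interior Ω :=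
    hsc hxτ hyσ hne' (by norm_num) (by norm_num) (by norm_num)
  have hmτ : m + σ • v ∈ interior Ω := by
    have : m + σ • v = (1/2 : ℝ) • (x + σ • v) + (1/2 : ℝ) • (y + σ • v) := by
      rw [hm]; module
    rw [this]; exact hint
  have hc : Continuous fun s : ℝ => m + s • v := by fun_prop
  have hU : IsOpen ((fun s : ℝ => m + s • v) ⁻¹' interior Ω) :=
    isOpen_interior.preimage hc
  obtain ⟨ε, hε, hball⟩ := Metric.isOpen_iff.mp hU σ hmτ
  set δ : ℝ := min ε σ / 2 with hδ
  have hδpos : 0 < δ := by positivity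
  have hδlt : δ < ε := by
    calc δ ≤ ε / 2 := by apply div_le_div_of_nonneg_right (min_le_left _ _) <;> norm_num
    _ < ε := by linarith
  have hδleσ : δ < σ := by
    calc δ ≤ σ / 2 := by apply div_le_div_of_nonneg_right (min_le_right _ _) <;> norm_num
    _ < σ := by linarith
  have hs0 : 0 ≤ σ - δ := by linarith
  have hsmem : m + (σ - δ) • v ∈ interior Ω := by
    apply hball
    simp only [Metric.mem_ball, Real.dist_eq]
    rw [abs_of_nonpos (by linarith)]
    linarith
  have hTm : dirMinTime v Ω m = ENNReal.ofReal σ :=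
    (hcon m hmseg x (left_mem_segment ℝ x y)).trans hTx
  have hle : dirMinTime v Ω m ≤ ENNReal.ofReal (σ - δ) :=
    iInf₂_le (σ - δ) ⟨hs0, interior_subset hsmem⟩
  rw [hTm] at hle
  have hlt : ENNReal.ofReal (σ - δ) < ENNReal.ofReal σ :=
    (ENNReal.ofReal_lt_ofReal_iff hτpos).mpr (by linarith)
  exact absurd hle (not_le.mpr hlt)
end
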